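/- arXiv:2110.14271 — 6 statements merged into one kernel-verified Lean document; each statement's English description precedes it below -/
import Mathlib

section
/- Consider a trading instance with agents N and items M, where each agent i owns a set S_i ⊆ M (the sets S_i partition M) and demands a set D_i ⊆ M with S_i ∩ D_i = ∅, and let l = max_i |D_i|. For every (possibly dynamic) execution r_o there exists a static execution r_s (one in which each item is reallocated at most once) such that every agent who receives at least one item in r_o receives at least one item in r_s. Consequently, the social welfare of an optimal static execution is at least 1/l times the social welfare of an optimal execution. -/
structure TState (N M : Type) where
  own : N → Finset M
  dem : N → Finset M

variable {N M : Type} [DecidableEq N] [DecidableEq M]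

/-- In a trading cycle `c = [(i₁,j₁),…,(i_k,j_k)]`, agent `i_t` receives item `j_t`;
`gives c` pairs each agent with the item he gives, namely `j_{t-1}` (cyclically). -/
def gives (c : List (N × M)) : List (N × M) :=
  (c.map Prod.fst).zip ((c.rotate (c.length - 1)).map Prod.snd)

/-- A valid cycle step: nonempty, visits each agent and each item at most once,
every participating agent receives an item he currently demands and gives an item
he currently owns. -/
def ValidCycle (s : TState N M) (c : List (N × M)) : Prop :=
  c ≠ [] ∧ (c.map Prod.fst).Nodup ∧ (c.map Prod.snd).Nodup ∧
    (∀ p ∈ c, p.2 ∈ s.dem p.1) ∧ (∀ p ∈ gives c, p.2 ∈ s.own p.1)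

/-- The state after executing a cycle: every used demand edge is reversed into a
supply edge (the received item moves into the agent's supply and leaves his demand),
and every used supply edge is removed. -/
def stepCycle (s : TState N M) (c : List (N × M)) : TState N M where
  own i := ((s.own i).filter fun j => (i, j) ∉ gives c) ∪
      ((c.filter fun p => decide (p.1 = i)).map Prod.snd).toFinset
  dem i := (s.dem i).filter fun j => (i, j) ∉ c

/-- An execution is a sequence of cycle steps, each valid in the successively
updated state. -/
def ValidExec (s : TState N M) : List (List (N × M)) → Prop
  | [] => True
  | c :: r => ValidCycle s c ∧ ValidExec (stepCycle s c) r

/-- Total number of exchanges (items received) in an execution. -/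
def exchanges (r : List (List (N × M))) : ℕ := (r.map List.length).sum

/-- Number of items agent `i` receives during execution `r`. -/
def receivedCount (r : List (List (N × M))) (i : N) : ℕ :=
  (r.map fun c => c.countP fun p => decide (p.1 = i)).sum

/-- Number of items agent `i` gives during execution `r`. -/
def givenCount (r : List (List (N × M))) (i : N) : ℕ :=
  (r.map fun c => (gives c).countP fun p => decide (p.1 = i)).sum

/-- A static execution allocates each item at most once. -/
def StaticExec (r : List (List (N × M))) : Prop := (r.flatten.map Prod.snd).Nodup

/-!
Along any execution, ownership stays a partition of the items, every agent holds as many items as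
he started with, only items from `S i ∪ D i` are ever held by `i`, and an agent who has received
something holds an item outside his original supply. Let `T` be the items whose final owner
differs from their original owner, seen as edges from original to final owner in a multigraph on
the agents. Since holdings keep their size, this multigraph is balanced, so it splits into simple
cycles; executing these from the initial state moves each item of `T` once, straight from its
original owner to its final owner, who demanded it from the start. Every agent served by the
dynamic execution is served by this static one, and receives at most `|D i| ≤ l` items in the
former.
-/

set_option linter.unusedSectionVars false

def itemsOf (c : List (N × M)) (i : N) : Finset M :=
  ((c.filter fun p => decide (p.1 = i)).map Prod.snd).toFinset

lemma mem_itemsOf {c : List (N × M)} {i : N} {j : M} : j ∈ itemsOf c i ↔ (i, j) ∈ c := by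
  simp [itemsOf, and_comm]

lemma card_itemsOf {c : List (N × M)} (h : (c.map Prod.snd).Nodup) (i : N) :
    (itemsOf c i).card = c.countP fun p => decide (p.1 = i) := by
  rw [itemsOf, List.toFinset_card_of_nodup ((List.filter_sublist.map _).nodup h),
    List.length_map, List.countP_eq_length_filter]

lemma map_fst_gives (c : List (N × M)) : (gives c).map Prod.fst = c.map Prod.fst :=
  List.map_fst_zip (by simp)

lemma map_snd_gives_perm (c : List (N × M)) : ((gives c).map Prod.snd).Perm (c.map Prod.snd) := by
  rw [gives, List.map_snd_zip (by simp), List.map_rotate]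
  exact List.rotate_perm _ _

lemma stepCycle_own (s : TState N M) (c : List (N × M)) (i : N) :
    (stepCycle s c).own i = s.own i \ itemsOf (gives c) i ∪ itemsOf c i := by
  ext j
  simp [stepCycle, mem_itemsOf, and_comm]

lemma stepCycle_dem (s : TState N M) (c : List (N × M)) (i : N) :
    (stepCycle s c).dem i = s.dem i \ itemsOf c i := by
  ext j
  simp [stepCycle, mem_itemsOf]

lemma mem_stepCycle_own_of_notMem {s : TState N M} {c : List (N × M)} {i : N} {j : M}
    (hj : j ∈ s.own i) (hjc : j ∉ c.map Prod.snd) : j ∈ (stepCycle s c).own i := by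
  rw [stepCycle_own]
  refine Finset.mem_union_left _ (Finset.mem_sdiff.2 ⟨hj, fun h => hjc ?_⟩)
  exact (map_snd_gives_perm c).mem_iff.1 (List.mem_map_of_mem (f := Prod.snd) (mem_itemsOf.1 h))

lemma mem_stepCycle_dem_of_notMem {s : TState N M} {c : List (N × M)} {i : N} {j : M}
    (hj : j ∈ s.dem i) (hjc : j ∉ c.map Prod.snd) : j ∈ (stepCycle s c).dem i :=
  stepCycle_dem s c i ▸ Finset.mem_sdiff.2
    ⟨hj, fun h => hjc (List.mem_map_of_mem (f := Prod.snd) (mem_itemsOf.1 h))⟩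

namespace ValidCycle

variable {s : TState N M} {c : List (N × M)}

lemma nodup_map_snd (hc : ValidCycle s c) : (c.map Prod.snd).Nodup := hc.2.2.1

lemma itemsOf_subset_dem (hc : ValidCycle s c) (i : N) : itemsOf c i ⊆ s.dem i :=
  fun _ hj => hc.2.2.2.1 _ (mem_itemsOf.1 hj)

lemma itemsOf_gives_subset_own (hc : ValidCycle s c) (i : N) : itemsOf (gives c) i ⊆ s.own i :=
  fun _ hj => hc.2.2.2.2 _ (mem_itemsOf.1 hj)

lemma card_itemsOf_gives (hc : ValidCycle s c) (i : N) :
    (itemsOf (gives c) i).card = (itemsOf c i).card := by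
  rw [card_itemsOf ((map_snd_gives_perm c).nodup_iff.2 hc.nodup_map_snd),
    card_itemsOf hc.nodup_map_snd]
  have := congrArg (List.countP fun x => decide (x = i)) (map_fst_gives c)
  simpa only [List.countP_map, Function.comp_def] using this

lemma card_stepCycle_own (hc : ValidCycle s c) {i : N} (hi : Disjoint (s.own i) (s.dem i)) :
    ((stepCycle s c).own i).card = (s.own i).card := by
  have hG := hc.itemsOf_gives_subset_own i
  rw [stepCycle_own, Finset.card_union_of_disjoint
      (hi.mono Finset.sdiff_subset (hc.itemsOf_subset_dem i)),
    Finset.card_sdiff_of_subset hG, ← hc.card_itemsOf_gives]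
  have := Finset.card_le_card hG
  omega

lemma card_stepCycle_dem_add (hc : ValidCycle s c) (i : N) :
    ((stepCycle s c).dem i).card + c.countP (fun p => decide (p.1 = i)) = (s.dem i).card := by
  rw [stepCycle_dem, ← card_itemsOf hc.nodup_map_snd,
    Finset.card_sdiff_add_card_eq_card (hc.itemsOf_subset_dem i)]

lemma existsUnique_owner (hc : ValidCycle s c) (h : ∀ j, ∃! i, j ∈ s.own i) (j : M) :
    ∃! i, j ∈ (stepCycle s c).own i := by
  simp only [stepCycle_own, Finset.mem_union, Finset.mem_sdiff, mem_itemsOf]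
  by_cases hj : ∃ i, (i, j) ∈ c
  · obtain ⟨i, hi⟩ := hj
    refine ⟨i, Or.inr hi, fun k hk => ?_⟩
    rcases hk with ⟨hk, hnot⟩ | hk
    · obtain ⟨⟨g, j'⟩, hg, rfl⟩ := List.mem_map.1
        ((map_snd_gives_perm c).mem_iff.2 (List.mem_map_of_mem (f := Prod.snd) hi))
      have hown := hc.itemsOf_gives_subset_own g (mem_itemsOf.2 hg)
      exact absurd (by rwa [(h j').unique hk hown]) hnot
    · exact congrArg Prod.fst (List.inj_on_of_nodup_map hc.nodup_map_snd hk hi rfl)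
  · simp only [not_exists] at hj
    have hg : ∀ k, (k, j) ∉ gives c := fun k hk => by
      obtain ⟨⟨i, j'⟩, hi, rfl⟩ := List.mem_map.1
        ((map_snd_gives_perm c).mem_iff.1 (List.mem_map_of_mem (f := Prod.snd) hk))
      exact hj i hi
    simpa [hg, hj] using h j

end ValidCycle

structure TradeInv (S D : N → Finset M) (s : TState N M) : Prop where
  existsUnique_owner : ∀ j, ∃! i, j ∈ s.own i
  dem_subset : ∀ i, s.dem i ⊆ D i
  own_subset : ∀ i, s.own i ⊆ S i ∪ D i
  disjoint_own_dem : ∀ i, Disjoint (s.own i) (s.dem i)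
  card_own : ∀ i, (s.own i).card = (S i).card
  exists_mem_own_notMem : ∀ i, s.dem i ≠ D i → ∃ j ∈ s.own i, j ∉ S i

namespace TradeInv

variable {S D : N → Finset M}

lemma init (hpart : ∀ j : M, ∃! i : N, j ∈ S i) (hdisj : ∀ i : N, S i ∩ D i = ∅) :
    TradeInv S D ⟨S, D⟩ where
  existsUnique_owner := hpart
  dem_subset _ := subset_rfl
  own_subset _ := Finset.subset_union_left
  disjoint_own_dem i := Finset.disjoint_iff_inter_eq_empty.2 (hdisj i)
  card_own _ := rfl
  exists_mem_own_notMem _ h := absurd rfl h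

lemma stepCycle {s : TState N M} {c : List (N × M)} (hI : TradeInv S D s)
    (hdisj : ∀ i : N, S i ∩ D i = ∅) (hc : ValidCycle s c) :
    TradeInv S D (stepCycle s c) where
  existsUnique_owner := hc.existsUnique_owner hI.existsUnique_owner
  dem_subset i := by
    rw [stepCycle_dem]
    exact Finset.sdiff_subset.trans (hI.dem_subset i)
  own_subset i := by
    rw [stepCycle_own]
    exact Finset.union_subset (Finset.sdiff_subset.trans (hI.own_subset i))
      ((hc.itemsOf_subset_dem i).trans ((hI.dem_subset i).trans Finset.subset_union_right))
  disjoint_own_dem i := by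
    rw [stepCycle_own, stepCycle_dem]
    exact Finset.disjoint_union_left.2 ⟨(hI.disjoint_own_dem i).mono Finset.sdiff_subset
      Finset.sdiff_subset, Finset.disjoint_sdiff⟩
  card_own i := (hc.card_stepCycle_own (hI.disjoint_own_dem i)).trans (hI.card_own i)
  exists_mem_own_notMem i hne := by
    rcases (itemsOf c i).eq_empty_or_nonempty with hR | ⟨r, hr⟩
    · -- the agent took no part in the cycle, so neither his supply nor his demand changed
      have hG : itemsOf (gives c) i = ∅ := by
        rw [← Finset.card_eq_zero, hc.card_itemsOf_gives, hR, Finset.card_empty]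
      rw [stepCycle_dem, hR, Finset.sdiff_empty] at hne
      rw [stepCycle_own, hR, hG, Finset.sdiff_empty, Finset.union_empty]
      exact hI.exists_mem_own_notMem i hne
    · refine ⟨r, by rw [stepCycle_own]; exact Finset.mem_union_right _ hr, fun hrS => ?_⟩
      have hrD := hI.dem_subset i (hc.itemsOf_subset_dem i hr)
      simpa [hdisj i] using Finset.mem_inter.2 ⟨hrS, hrD⟩

end TradeInv

def finalState (s : TState N M) : List (List (N × M)) → TState N M
  | [] => s
  | c :: r => finalState (stepCycle s c) r

lemma TradeInv.finalState {S D : N → Finset M} (hdisj : ∀ i : N, S i ∩ D i = ∅)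
    {s : TState N M} {r : List (List (N × M))} (hr : ValidExec s r) (hI : TradeInv S D s) :
    TradeInv S D (finalState s r) := by
  induction r generalizing s with
  | nil => exact hI
  | cons c r ih => exact ih hr.2 (hI.stepCycle hdisj hr.1)

lemma receivedCount_add_card_dem_finalState {s : TState N M} {r : List (List (N × M))}
    (hr : ValidExec s r) (i : N) :
    receivedCount r i + ((finalState s r).dem i).card = (s.dem i).card := by
  induction r generalizing s with
  | nil => simp [receivedCount, finalState]
  | cons c r ih =>
    have hc := hr.1.card_stepCycle_dem_add i
    have hrest := ih hr.2
    simp only [receivedCount, List.map_cons, List.sum_cons, finalState] at hrest ⊢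
    omega

lemma receivedCount_pos_of_mem {r : List (List (N × M))} {i : N} {j : M}
    (h : (i, j) ∈ r.flatten) : 0 < receivedCount r i := by
  rw [receivedCount, ← List.countP_flatten]
  exact List.countP_pos_iff.2 ⟨(i, j), h, by simp⟩

lemma receivedCount_eq_count (r : List (List (N × M))) (i : N) :
    receivedCount r i = (r.flatten.map Prod.fst).count i := by
  rw [receivedCount, ← List.countP_flatten, List.count, List.countP_map]
  congr 1

lemma exchanges_eq_sum_receivedCount [Fintype N] (r : List (List (N × M))) :
    exchanges r = ∑ i, receivedCount r i := by
  simp only [receivedCount_eq_count, ← Multiset.coe_count]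
  rw [Multiset.sum_count_eq_card fun a _ => Finset.mem_univ a, Multiset.coe_card,
    List.length_map, List.length_flatten, exchanges]

/-- `L` is a simple cycle in the multigraph with an edge `src x → tgt x` for each `x`: the edge
`L[t]` enters the vertex left by `L[t-1]` (indices mod `L.length`), and no vertex is entered
twice. -/
structure IsSimpleCycle {α β : Type*} (src tgt : α → β) (L : List α) : Prop where
  ne_nil : L ≠ []
  nodup_map_tgt : (L.map tgt).Nodup
  map_tgt_eq : L.map tgt = (L.rotate (L.length - 1)).map src

lemma exists_lt_eq_injOn_Iio {β : Type*} (f : ℕ → β) (U : Finset β) (hU : ∀ t, f t ∈ U) :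
    ∃ a b, a < b ∧ f a = f b ∧ Set.InjOn f (Set.Iio b) := by
  classical
  have hrep : ∃ b, ∃ a < b, f a = f b := by
    obtain ⟨t₁, -, t₂, -, hne, heq⟩ := Finset.exists_ne_map_eq_of_card_lt_of_maps_to
      (s := Finset.range (U.card + 1)) (by simp) (fun t _ => hU t)
    rcases hne.lt_or_gt with h | h
    exacts [⟨t₂, t₁, h, heq⟩, ⟨t₁, t₂, h, heq.symm⟩]
  obtain ⟨a, hab, hfab⟩ := Nat.find_spec hrep
  refine ⟨a, Nat.find hrep, hab, hfab, fun s hs t ht hst => ?_⟩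
  by_contra hne
  rcases lt_or_gt_of_ne hne with h | h
  · exact Nat.find_min hrep ht ⟨s, h, hst⟩
  · exact Nat.find_min hrep hs ⟨t, h, hst.symm⟩

lemma isSimpleCycle_of_chain {α β : Type*} {src tgt : α → β} (x : ℕ → α)
    (hx : ∀ t, tgt (x (t + 1)) = src (x t)) {a b : ℕ} (hab : a < b)
    (hrep : tgt (x a) = tgt (x b)) (hinj : Set.InjOn (fun t => tgt (x t)) (Set.Iio b)) :
    IsSimpleCycle src tgt ((List.range (b - a)).map fun t => x (a + t)) where
  ne_nil := by simp; omega
  nodup_map_tgt := by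
    rw [List.map_map]
    refine List.nodup_range.map_on fun s hs t ht h => ?_
    rw [List.mem_range] at hs ht
    have : a + s = a + t := hinj (by simp; omega) (by simp; omega) h
    omega
  map_tgt_eq := by
    refine List.ext_getElem (by simp) fun t h _ => ?_
    simp only [List.length_map, List.length_range] at h
    simp only [List.getElem_map, List.getElem_rotate, List.getElem_range, List.length_map,
      List.length_range]
    rcases Nat.eq_zero_or_pos t with rfl | ht
    · rw [Nat.zero_add, Nat.mod_eq_of_lt (by omega), Nat.add_zero, hrep, ← hx]
      congr 2
      omega
    · rw [show t + (b - a - 1) = t - 1 + (b - a) by omega, Nat.add_mod_right,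
        Nat.mod_eq_of_lt (by omega), ← hx]
      congr 2
      omega

lemma Finset.exists_isSimpleCycle {α β : Type*} {T : Finset α} (hT : T.Nonempty)
    {src tgt : α → β} (hout : ∀ j ∈ T, ∃ x ∈ T, tgt x = src j) :
    ∃ L, IsSimpleCycle src tgt L ∧ ∀ x ∈ L, x ∈ T := by
  classical
  obtain ⟨j₀, hj₀⟩ := hT
  choose! next hnextT hnext using hout
  have hxT : ∀ t, next^[t] j₀ ∈ T := fun t => by
    induction t with
    | zero => exact hj₀
    | succ t ih => rw [Function.iterate_succ_apply']; exact hnextT _ ih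
  have hchain : ∀ t, tgt (next^[t + 1] j₀) = src (next^[t] j₀) := fun t => by
    rw [Function.iterate_succ_apply']; exact hnext _ (hxT t)
  obtain ⟨a, b, hab, hrep, hinj⟩ := exists_lt_eq_injOn_Iio (fun t => tgt (next^[t] j₀))
    (T.image tgt) fun t => Finset.mem_image_of_mem _ (hxT t)
  exact ⟨_, isSimpleCycle_of_chain _ hchain hab hrep hinj, by simp [hxT]⟩

namespace IsSimpleCycle

variable {α β : Type*} {src tgt : α → β} {L : List α}

lemma map_src_eq_map_tgt (hL : IsSimpleCycle src tgt L) :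
    (L : Multiset α).map src = (L : Multiset α).map tgt := by
  simp only [Multiset.map_coe, Multiset.coe_eq_coe, hL.map_tgt_eq]
  exact ((L.rotate_perm _).map src).symm

lemma map_val_sdiff [DecidableEq α] (hL : IsSimpleCycle src tgt L) {T : Finset α}
    (hLT : ∀ x ∈ L, x ∈ T) (hbal : T.val.map src = T.val.map tgt) :
    (T \ L.toFinset).val.map src = (T \ L.toFinset).val.map tgt := by
  have hnd : L.Nodup := hL.nodup_map_tgt.of_map tgt
  have hT : T.val = (T \ L.toFinset).val + L := by
    rw [Finset.sdiff_val, List.toFinset_val, hnd.dedup, Multiset.sub_add_cancel]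
    exact (Multiset.le_iff_subset (Multiset.coe_nodup.2 hnd)).2 hLT
  rw [hT, Multiset.map_add, Multiset.map_add, hL.map_src_eq_map_tgt] at hbal
  exact add_right_cancel hbal

end IsSimpleCycle

lemma gives_map_pair {L : List M} {giver taker : M → N}
    (h : L.map taker = (L.rotate (L.length - 1)).map giver) :
    gives (L.map fun j => (taker j, j)) = (L.rotate (L.length - 1)).map fun j => (giver j, j) := by
  have hsnd : (L.map fun j => (taker j, j)).map Prod.snd = L := by simp [Function.comp_def]
  have hfst : (L.map fun j => (taker j, j)).map Prod.fst = L.map taker := by simp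
  rw [gives, List.length_map, List.map_rotate, hsnd, hfst, h]
  simpa using List.zip_map' (f := giver) (g := id) (l := L.rotate (L.length - 1))

lemma IsSimpleCycle.validCycle {s : TState N M} {giver taker : M → N} {L : List M}
    (hL : IsSimpleCycle giver taker L) (hown : ∀ j ∈ L, j ∈ s.own (giver j))
    (hdem : ∀ j ∈ L, j ∈ s.dem (taker j)) : ValidCycle s (L.map fun j => (taker j, j)) := by
  refine ⟨by simpa using hL.ne_nil, by simpa [Function.comp_def] using hL.nodup_map_tgt,
    by simpa [Function.comp_def] using hL.nodup_map_tgt.of_map taker, ?_, ?_⟩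
  · simp only [List.mem_map]
    rintro _ ⟨j, hj, rfl⟩
    exact hdem j hj
  · rw [gives_map_pair hL.map_tgt_eq]
    simp only [List.mem_map, List.mem_rotate]
    rintro _ ⟨j, hj, rfl⟩
    exact hown j hj

/-- `hbal`: every agent is to give as many items of `T` as he is to receive. -/
lemma exists_staticExec_of_balanced (s : TState N M) (T : Finset M) (giver taker : M → N)
    (hown : ∀ j ∈ T, j ∈ s.own (giver j)) (hdem : ∀ j ∈ T, j ∈ s.dem (taker j))
    (hbal : T.val.map giver = T.val.map taker) :
    ∃ rs, ValidExec s rs ∧ StaticExec rs ∧ (∀ p ∈ rs.flatten, p.2 ∈ T) ∧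
      ∀ j ∈ T, (taker j, j) ∈ rs.flatten := by
  induction T using Finset.strongInduction generalizing s with
  | H T ih =>
  rcases T.eq_empty_or_nonempty with rfl | hT
  · exact ⟨[], trivial, List.nodup_nil, by simp, by simp⟩
  have hout : ∀ j ∈ T, ∃ x ∈ T, taker x = giver j := fun j hj =>
    Multiset.mem_map.1 (hbal ▸ Multiset.mem_map_of_mem giver hj)
  obtain ⟨L, hL, hLT⟩ := Finset.exists_isSimpleCycle hT hout
  set c := L.map fun j => (taker j, j)
  have hcL : c.map Prod.snd = L := by simp [c, Function.comp_def]
  have hc : ValidCycle s c :=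
    hL.validCycle (fun j hj => hown j (hLT j hj)) fun j hj => hdem j (hLT j hj)
  have hsub : T \ L.toFinset ⊂ T :=
    Finset.sdiff_ssubset (fun x hx => hLT x (List.mem_toFinset.1 hx))
      (by simpa [List.toFinset_eq_empty_iff] using hL.ne_nil)
  have hrest : ∀ j ∈ T \ L.toFinset, j ∈ T ∧ j ∉ c.map Prod.snd := fun j hj => by
    simpa [hcL] using hj
  obtain ⟨rs, hrs, hstatic, hrsT, hcover⟩ := ih _ hsub (stepCycle s c)
    (fun j hj => mem_stepCycle_own_of_notMem (hown j (hrest j hj).1) (hrest j hj).2)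
    (fun j hj => mem_stepCycle_dem_of_notMem (hdem j (hrest j hj).1) (hrest j hj).2)
    (hL.map_val_sdiff hLT hbal)
  refine ⟨c :: rs, ⟨hc, hrs⟩, ?_, ?_, fun j hj => ?_⟩
  · rw [StaticExec, List.flatten_cons, List.map_append, hcL]
    refine List.Nodup.append (hL.nodup_map_tgt.of_map taker) hstatic fun x hxL hxrs => ?_
    obtain ⟨p, hp, rfl⟩ := List.mem_map.1 hxrs
    exact (Finset.mem_sdiff.1 (hrsT p hp)).2 (List.mem_toFinset.2 hxL)
  · simp only [List.flatten_cons, List.mem_append]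
    rintro p (hp | hp)
    · obtain ⟨j, hj, rfl⟩ := List.mem_map.1 hp
      exact hLT j hj
    · exact (Finset.mem_sdiff.1 (hrsT p hp)).1
  · rw [List.flatten_cons, List.mem_append]
    by_cases hjL : j ∈ L
    · exact Or.inl (List.mem_map_of_mem hjL)
    · exact Or.inr (hcover j (Finset.mem_sdiff.2 ⟨hj, by simpa using hjL⟩))

lemma exists_owner_fun {F : N → Finset M} (h : ∀ j, ∃! i, j ∈ F i) :
    ∃ f : M → N, ∀ i j, j ∈ F i ↔ f j = i := by
  choose f hf using fun j => (h j).exists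
  exact ⟨f, fun i j => ⟨fun hj => (h j).unique (hf j) hj, fun hfj => hfj ▸ hf j⟩⟩

lemma TradeInv.exists_staticExec [Fintype N] {S D : N → Finset M} {s : TState N M}
    (hpart : ∀ j : M, ∃! i : N, j ∈ S i) (hI : TradeInv S D s) :
    ∃ rs, ValidExec ⟨S, D⟩ rs ∧ StaticExec rs ∧
      ∀ i, ∀ j ∈ s.own i, j ∉ S i → (i, j) ∈ rs.flatten := by
  obtain ⟨giver, hgiver⟩ := exists_owner_fun hpart
  obtain ⟨taker, htaker⟩ := exists_owner_fun hI.existsUnique_owner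
  set T := Finset.univ.biUnion fun i => s.own i \ S i
  have hT : ∀ j, j ∈ T ↔ giver j ≠ taker j := by
    simp [T, hgiver, htaker, ne_comm]
  have hfiber : ∀ (f : M → N) i, (T.val.map f).count i = (T.filter fun j => i = f j).card :=
    fun f i => by rw [Multiset.count_map, ← Finset.filter_val, Finset.card_val]
  have hbal : T.val.map giver = T.val.map taker := by
    refine Multiset.ext.2 fun i => ?_
    have hgiver_fib : T.filter (fun j => i = giver j) = S i \ s.own i := by
      ext j; simp only [Finset.mem_filter, Finset.mem_sdiff, hT, hgiver, htaker]; grind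
    have htaker_fib : T.filter (fun j => i = taker j) = s.own i \ S i := by
      ext j; simp only [Finset.mem_filter, Finset.mem_sdiff, hT, hgiver, htaker]; grind
    rw [hfiber, hfiber, hgiver_fib, htaker_fib, Finset.card_sdiff_comm (hI.card_own i).symm]
  have hdem : ∀ j ∈ T, j ∈ D (taker j) := fun j hj => by
    have := hI.own_subset (taker j) ((htaker _ _).2 rfl)
    simp only [Finset.mem_union, hgiver] at this
    exact this.resolve_left ((hT j).1 hj)
  obtain ⟨rs, hrs, hstatic, -, hcover⟩ :=
    exists_staticExec_of_balanced ⟨S, D⟩ T giver taker (fun j _ => (hgiver _ _).2 rfl) hdem hbal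
  refine ⟨rs, hrs, hstatic, fun i j hj hjS => ?_⟩
  obtain rfl := (htaker i j).1 hj
  exact hcover j ((hT j).2 fun h => hjS ((hgiver _ _).2 h))

theorem stmt1_general {N M : Type} [Fintype N] [DecidableEq N] [DecidableEq M]
    (S D : N → Finset M) (l : ℕ)
    (hpart : ∀ j : M, ∃! i : N, j ∈ S i)
    (hdisj : ∀ i : N, S i ∩ D i = ∅)
    (hl : ∀ i : N, (D i).card ≤ l)
    (ro : List (List (N × M))) (hro : ValidExec ⟨S, D⟩ ro) :
    ∃ rs : List (List (N × M)), ValidExec ⟨S, D⟩ rs ∧ StaticExec rs ∧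
      (∀ i : N, 0 < receivedCount ro i → 0 < receivedCount rs i) ∧
      exchanges ro ≤ l * exchanges rs := by
  have hI := (TradeInv.init hpart hdisj).finalState hdisj hro
  obtain ⟨rs, hrs, hstatic, hcover⟩ := hI.exists_staticExec hpart
  have hcount := receivedCount_add_card_dem_finalState hro
  have hserved : ∀ i, 0 < receivedCount ro i → 0 < receivedCount rs i := fun i hi => by
    have hdem : (finalState ⟨S, D⟩ ro).dem i ≠ D i := fun h =>
      hi.ne' (Nat.add_eq_right.1 (h ▸ hcount i))
    obtain ⟨j, hj, hjS⟩ := hI.exists_mem_own_notMem i hdem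
    exact receivedCount_pos_of_mem (hcover i j hj hjS)
  refine ⟨rs, hrs, hstatic, hserved, ?_⟩
  rw [exchanges_eq_sum_receivedCount, exchanges_eq_sum_receivedCount, Finset.mul_sum]
  refine Finset.sum_le_sum fun i _ => ?_
  have hle : receivedCount ro i ≤ l := (Nat.le_of_add_right_le (hcount i).le).trans (hl i)
  rcases (receivedCount ro i).eq_zero_or_pos with h | h
  · simp [h]
  · exact hle.trans (Nat.le_mul_of_pos_right l (hserved i h))

/-- For every (possibly dynamic) execution `ro` there is a static
execution `rs` in which every agent who received an item in `ro` receives an item;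
consequently the optimal static welfare is at least `1/l` of the optimal welfare. -/
theorem stmt1 {N M : Type} [Fintype N] [Fintype M] [DecidableEq N] [DecidableEq M]
    (S D : N → Finset M) (l : ℕ)
    (hpart : ∀ j : M, ∃! i : N, j ∈ S i)
    (hdisj : ∀ i : N, S i ∩ D i = ∅)
    (hl : ∀ i : N, (D i).card ≤ l)
    (ro : List (List (N × M))) (hro : ValidExec ⟨S, D⟩ ro) :
    ∃ rs : List (List (N × M)), ValidExec ⟨S, D⟩ rs ∧ StaticExec rs ∧
      (∀ i : N, 0 < receivedCount ro i → 0 < receivedCount rs i) ∧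
      exchanges ro ≤ l * exchanges rs :=
  stmt1_general S D l hpart hdisj hl ro hro
end

section
/- Let M be a perfect matching of the bipartite graph H(G) built from a directed graph G = (V,E), and let E_c = {e ∈ E : (e,0) is matched in M to (e',1) for some e' ≠ e}. Then in the subgraph (V, E_c) every vertex has equal in-degree and out-degree; consequently E_c decomposes into edge-disjoint directed cycles, yielding a cycle cover using exactly |E_c| edges, where |E_c| equals the weight of M. -/
/-!
A perfect matching of `H(G)` is a permutation `m` of the edge set that moves every edge it
does not fix to a consecutive edge. Thus `m` maps the moved edges entering `v` bijectively
onto the moved edges leaving `v`, which balances the degrees, and the orbits of `m` on `E_c`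
(the cycle factors of `m`, each listed from a base point) are edge-disjoint closed trails.
-/

variable {V : Type} [Fintype V] [DecidableEq V]

/-- The edges of a directed graph `G` (no parallel edges). -/
abbrev DEdge (G : V → V → Prop) := {p : V × V // G p.1 p.2}

/-- Two edges are consecutive if the head of the first is the tail of the second. -/
def Consec {G : V → V → Prop} (e f : DEdge G) : Prop := e.val.2 = f.val.1

/-- A perfect matching of the bipartite edge-graph `H(G)` on `E × {0,1}`, encoded by
the bijection `m` sending each `(e,0)` to its partner `(m e, 1)`: every edge is
matched either to its own copy (a weight-0 edge of `H(G)`) or to a consecutive edge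
(a weight-1 edge of `H(G)`). -/
def IsPMofH {G : V → V → Prop} (m : DEdge G ≃ DEdge G) : Prop :=
  ∀ e : DEdge G, m e = e ∨ Consec e (m e)

/-- The weight of a perfect matching of `H(G)`: the number of edges not matched to
their own copy. -/
noncomputable def pmWeight {G : V → V → Prop} (m : DEdge G ≃ DEdge G) : ℕ :=
  Set.ncard {e : DEdge G | m e ≠ e}

/-- A closed directed trail (cycle) in `G`: a nonempty duplicate-free list of edges,
consecutively linked, cyclically. -/
def IsClosedTrail {G : V → V → Prop} (c : List (DEdge G)) : Prop :=
  c ≠ [] ∧ c.Nodup ∧ List.Chain' Consec c ∧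
    ∀ h : c ≠ [], Consec (c.getLast h) (c.head h)

/-- A collection of edge-disjoint directed cycles in `G`. -/
def IsCycleCollection {G : V → V → Prop} (cs : List (List (DEdge G))) : Prop :=
  (∀ c ∈ cs, IsClosedTrail c) ∧ cs.flatten.Nodup

theorem List.Nodup.isChain_and_getLast_of_forall_next {α : Type*} [DecidableEq α]
    {R : α → α → Prop} {l : List α} (hl : l.Nodup) (h : ∀ x (hx : x ∈ l), R x (l.next x hx)) :
    l.IsChain R ∧ ∀ hne : l ≠ [], R (l.getLast hne) (l.head hne) := by
  have step (i : ℕ) (hi : i < l.length) :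
      R l[i] (l[(i + 1) % l.length]'(Nat.mod_lt _ (by omega))) :=
    l.next_getElem hl i hi ▸ h _ _
  refine ⟨List.isChain_iff_getElem.2 fun i hi => ?_, fun hne => ?_⟩
  · simpa [Nat.mod_eq_of_lt hi] using step i (by omega)
  · have hpos := List.length_pos_iff.2 hne
    simpa [List.getLast_eq_getElem, List.head_eq_getElem, Nat.sub_one_add_one_eq_of_pos hpos]
      using step _ (Nat.sub_lt hpos one_pos)

namespace Equiv.Perm

variable {α : Type*} [Fintype α] [DecidableEq α]

theorem IsCycle.mem_toList_iff {c : Perm α} (hc : c.IsCycle) {x y : α} (hx : c x ≠ x) :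
    y ∈ c.toList x ↔ c y ≠ y := by
  rw [Equiv.Perm.mem_toList_iff]
  exact ⟨fun h => mem_support.1 (h.1.mem_support_iff.1 h.2),
    fun hy => ⟨hc.sameCycle hx hy, mem_support.2 hx⟩⟩

theorem exists_list_toList_cycleFactorsFinset (σ : Perm α) :
    ∃ cs : List (List α), (∀ c ∈ cs, c ≠ [] ∧ c.Nodup ∧ ∀ x (hx : x ∈ c), c.next x hx = σ x) ∧
      cs.flatten.Nodup ∧ ∀ x, x ∈ cs.flatten ↔ σ x ≠ x := by
  -- `choose!` below needs `Nonempty α`.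
  cases isEmpty_or_nonempty α
  · exact ⟨[], by simp, by simp, isEmptyElim⟩
  have hrep (c) (hc : c ∈ σ.cycleFactorsFinset) : ∃ x, c x ≠ x := by
    obtain ⟨x, hx, -⟩ := (mem_cycleFactorsFinset_iff.1 hc).1
    exact ⟨x, hx⟩
  choose! rep hrep using hrep
  have hmem {c} (hc : c ∈ σ.cycleFactorsFinset) {x} : x ∈ c.toList (rep c) ↔ x ∈ c.support := by
    rw [(mem_cycleFactorsFinset_iff.1 hc).1.mem_toList_iff (hrep c hc), mem_support]
  refine ⟨σ.cycleFactorsFinset.toList.map fun c => c.toList (rep c), ?_, ?_, fun x => ?_⟩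
  · simp only [List.mem_map, Finset.mem_toList]
    rintro _ ⟨c, hc, rfl⟩
    refine ⟨fun h => toList_eq_nil_iff.1 h (mem_support.2 (hrep c hc)), nodup_toList ..,
      fun x hx => ?_⟩
    rw [next_toList_eq_apply, (mem_cycleFactorsFinset_iff.1 hc).2 x ((hmem hc).1 hx)]
  · refine List.nodup_flatten.2 ⟨by simp [nodup_toList], List.pairwise_map.2 ?_⟩
    refine σ.cycleFactorsFinset.nodup_toList.pairwise_of_forall_ne fun c hc d hd hcd => ?_
    rw [Finset.mem_toList] at hc hd
    have hdisj := (cycleFactorsFinset_pairwise_disjoint σ hc hd hcd).disjoint_support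
    exact fun x hxc hxd => Finset.disjoint_left.1 hdisj ((hmem hc).1 hxc) ((hmem hd).1 hxd)
  · rw [← mem_support, mem_support_iff_mem_support_of_mem_cycleFactorsFinset]
    simp only [List.mem_flatten, List.mem_map, Finset.mem_toList]
    constructor
    · rintro ⟨_, ⟨c, hc, rfl⟩, hx⟩
      exact ⟨c, hc, (hmem hc).1 hx⟩
    · rintro ⟨c, hc, hx⟩
      exact ⟨_, ⟨c, hc, rfl⟩, (hmem hc).2 hx⟩

end Equiv.Perm

theorem List.Nodup.ncard_setOf_mem {α : Type*} {l : List α} (hl : l.Nodup) :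
    {x | x ∈ l}.ncard = l.length := by
  classical
  rw [← List.coe_toFinset, Set.ncard_coe_finset, List.toFinset_card_of_nodup hl]

namespace IsPMofH

variable {V : Type} {G : V → V → Prop} {m : DEdge G ≃ DEdge G}

theorem consec_of_apply_ne (hm : IsPMofH m) {e : DEdge G} (he : m e ≠ e) : Consec e (m e) :=
  (hm e).resolve_left he

theorem preimage_movedOut_eq_movedIn (hm : IsPMofH m) (v : V) :
    m ⁻¹' {e | m e ≠ e ∧ e.val.1 = v} = {e | m e ≠ e ∧ e.val.2 = v} := by
  ext e
  simp only [Set.mem_preimage, Set.mem_ofPred_eq, m.injective.ne_iff]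
  refine and_congr_right fun he => ?_
  rw [show e.val.2 = (m e).val.1 from hm.consec_of_apply_ne he]

theorem ncard_movedOut_eq_ncard_movedIn (hm : IsPMofH m) (v : V) :
    {e | m e ≠ e ∧ e.val.1 = v}.ncard = {e | m e ≠ e ∧ e.val.2 = v}.ncard := by
  rw [← hm.preimage_movedOut_eq_movedIn v,
    Set.ncard_preimage_of_injective_subset_range m.injective (by simp)]

theorem exists_isCycleCollection [Finite (DEdge G)] (hm : IsPMofH m) :
    ∃ cs : List (List (DEdge G)), IsCycleCollection cs ∧ ∀ e, e ∈ cs.flatten ↔ m e ≠ e := by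
  classical
  have := Fintype.ofFinite (DEdge G)
  obtain ⟨cs, hcs, hnodup, hmem⟩ := Equiv.Perm.exists_list_toList_cycleFactorsFinset m
  refine ⟨cs, ⟨fun c hc => ?_, hnodup⟩, hmem⟩
  obtain ⟨hne, hnd, hnext⟩ := hcs c hc
  have hconsec (e) (he : e ∈ c) : Consec e (c.next e he) :=
    hnext e he ▸ hm.consec_of_apply_ne ((hmem e).1 (List.mem_flatten_of_mem hc he))
  exact ⟨hne, hnd, hnd.isChain_and_getLast_of_forall_next hconsec⟩

end IsPMofH

theorem stmt4_general {V : Type} [Fintype V] (G : V → V → Prop)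
    (m : DEdge G ≃ DEdge G) (hm : IsPMofH m) :
    (∀ v : V, Set.ncard {e : DEdge G | m e ≠ e ∧ e.val.1 = v}
        = Set.ncard {e : DEdge G | m e ≠ e ∧ e.val.2 = v}) ∧
    ∃ cs : List (List (DEdge G)), IsCycleCollection cs ∧
      (∀ e : DEdge G, e ∈ cs.flatten ↔ m e ≠ e) ∧
      cs.flatten.length = pmWeight m := by
  obtain ⟨cs, hcs, hmem⟩ := hm.exists_isCycleCollection
  refine ⟨hm.ncard_movedOut_eq_ncard_movedIn, cs, hcs, hmem, ?_⟩
  rw [pmWeight, ← hcs.2.ncard_setOf_mem]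
  simp only [hmem]

/-- For a perfect matching `m` of `H(G)` let
`E_c = {e | m e ≠ e}` be the edges not matched to their own copy. Then in the
subgraph with edge set `E_c` every vertex has equal in-degree and out-degree, and
consequently `E_c` decomposes into edge-disjoint directed cycles: a cycle cover
using exactly `|E_c|` edges, where `|E_c|` is the weight of `m`. -/
theorem stmt4 {V : Type} [Fintype V] [DecidableEq V] (G : V → V → Prop)
    (m : DEdge G ≃ DEdge G) (hm : IsPMofH m) :
    (∀ v : V, Set.ncard {e : DEdge G | m e ≠ e ∧ e.val.1 = v}
        = Set.ncard {e : DEdge G | m e ≠ e ∧ e.val.2 = v}) ∧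
    ∃ cs : List (List (DEdge G)), IsCycleCollection cs ∧
      (∀ e : DEdge G, e ∈ cs.flatten ↔ m e ≠ e) ∧
      cs.flatten.length = pmWeight m :=
  stmt4_general G m hm
end

section
/- Let E be a finite set with an injection π : E → positive integers, and assign each element e the real weight 1 + 2^{-π(e)}. If two subsets S, S' ⊆ E satisfy Σ_{e ∈ S} (1 + 2^{-π(e)}) = Σ_{e ∈ S'} (1 + 2^{-π(e)}), then S = S'. -/
/-!
The weight of `T` is `#T + f T` with `f T = ∑ e ∈ T, 2^{-π e}`, and `0 ≤ f T < 1` because the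
exponents are distinct and positive. So equal weights force equal fractional parts `f S = f S'`.
Multiplying by `2^N` for `N` at least every exponent turns `f T` into the natural number whose
binary digits are the positions `N - π e`, and uniqueness of binary expansions gives
`π '' S = π '' S'`.
-/

open Finset

lemma Finset.image_tsub_image_tsub {A : Finset ℕ} {N : ℕ} (hA : ∀ n ∈ A, n ≤ N) :
    (A.image (N - ·)).image (N - ·) = A := by
  rw [image_image]
  exact (image_congr fun n hn => show N - (N - n) = n by have := hA n hn; omega).trans image_id

lemma natCast_pow_mul_sum_zpow_neg {m N : ℕ} (hm : m ≠ 0) {A : Finset ℕ} (hA : ∀ n ∈ A, n ≤ N) :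
    (m : ℝ) ^ N * ∑ n ∈ A, (m : ℝ) ^ (-(n : ℤ)) = ((∑ i ∈ A.image (N - ·), m ^ i : ℕ) : ℝ) := by
  rw [sum_image fun a ha b hb hab => by have := hA a ha; have := hA b hb; omega,
    mul_sum]
  push_cast
  refine sum_congr rfl fun n hn => ?_
  rw [← zpow_natCast, ← zpow_add₀ (by exact_mod_cast hm), ← zpow_natCast, Nat.cast_sub (hA n hn)]
  ring_nf

lemma sum_zpow_neg_lt_one {m : ℕ} (hm : 2 ≤ m) {A : Finset ℕ} (hA : ∀ n ∈ A, 1 ≤ n) :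
    ∑ n ∈ A, (m : ℝ) ^ (-(n : ℤ)) < 1 := by
  set N := A.sup id
  have hle : ∀ n ∈ A, n ≤ N := fun n hn => le_sup (f := id) hn
  have hpos : (0 : ℝ) < (m : ℝ) ^ N := by positivity
  rw [← mul_lt_mul_iff_right₀ hpos, mul_one, natCast_pow_mul_sum_zpow_neg (by omega) hle]
  exact_mod_cast Nat.geomSum_lt hm fun i hi => by
    obtain ⟨n, hn, rfl⟩ := mem_image.1 hi
    have := hA n hn; have := hle n hn; omega

lemma sum_zpow_neg_injective {m : ℕ} (hm : 2 ≤ m) :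
    Function.Injective fun A : Finset ℕ => ∑ n ∈ A, (m : ℝ) ^ (-(n : ℤ)) := by
  intro A B hAB
  set N := (A ∪ B).sup id
  have hA : ∀ n ∈ A, n ≤ N := fun n hn => le_sup (f := id) (mem_union_left B hn)
  have hB : ∀ n ∈ B, n ≤ N := fun n hn => le_sup (f := id) (mem_union_right A hn)
  have hm0 : m ≠ 0 := by omega
  have hscaled := congrArg ((m : ℝ) ^ N * ·) hAB
  simp only [natCast_pow_mul_sum_zpow_neg hm0 hA, natCast_pow_mul_sum_zpow_neg hm0 hB,
    Nat.cast_inj] at hscaled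
  rw [← image_tsub_image_tsub hA, ← image_tsub_image_tsub hB, geomSum_injective hm hscaled]

lemma eq_of_natCast_add_eq_natCast_add {k k' : ℕ} {x x' : ℝ} (hx : 0 ≤ x ∧ x < 1)
    (hx' : 0 ≤ x' ∧ x' < 1) (h : k + x = k' + x') : x = x' := by
  calc x = Int.fract (k + x) := by rw [Int.fract_natCast_add, Int.fract_eq_self.2 hx]
    _ = Int.fract (k' + x') := by rw [h]
    _ = x' := by rw [Int.fract_natCast_add, Int.fract_eq_self.2 hx']

theorem stmt8_general {E : Type}
    (π : E → ℕ) (hinj : Function.Injective π) (hpos : ∀ e, 1 ≤ π e)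
    (S S' : Finset E)
    (h : (∑ e ∈ S, (1 + (2 : ℝ) ^ (-(π e : ℤ))))
        = ∑ e ∈ S', (1 + (2 : ℝ) ^ (-(π e : ℤ)))) :
    S = S' := by
  have weight_eq (T : Finset E) : ∑ e ∈ T, (1 + (2 : ℝ) ^ (-(π e : ℤ)))
      = #T + ∑ n ∈ T.image π, ((2 : ℕ) : ℝ) ^ (-(n : ℤ)) := by
    rw [sum_add_distrib, sum_const, nsmul_one, sum_image hinj.injOn, Nat.cast_ofNat]
  have frac_mem (T : Finset E) : 0 ≤ ∑ n ∈ T.image π, ((2 : ℕ) : ℝ) ^ (-(n : ℤ)) ∧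
      ∑ n ∈ T.image π, ((2 : ℕ) : ℝ) ^ (-(n : ℤ)) < 1 :=
    ⟨by positivity, sum_zpow_neg_lt_one le_rfl fun n hn => by
      obtain ⟨e, -, rfl⟩ := mem_image.1 hn; exact hpos e⟩
  rw [weight_eq, weight_eq] at h
  exact image_injective hinj <| sum_zpow_neg_injective le_rfl <|
    eq_of_natCast_add_eq_natCast_add (frac_mem S) (frac_mem S') h

/-- With distinct positive integers `π e` and element weights
`1 + 2^{-π e}`, two subsets with equal total weight coincide. -/
theorem stmt8 {E : Type} [DecidableEq E]
    (π : E → ℕ) (hinj : Function.Injective π) (hpos : ∀ e, 1 ≤ π e)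
    (S S' : Finset E)
    (h : (∑ e ∈ S, (1 + (2 : ℝ) ^ (-(π e : ℤ))))
        = ∑ e ∈ S', (1 + (2 : ℝ) ^ (-(π e : ℤ)))) :
    S = S' :=
  stmt8_general π hinj hpos S S' h
end

section
/- Let G be a trading graph for an instance G with reports x', and let Ḡ be the reversed instance in which every agent's demand and supply sets are swapped (so every edge of the trading graph is reversed). If M is a perfect matching of H'(G) of weight w, then the reversed matching M̄ = {(((k,j),0),((j,i),1)) : (((i,j),0),((j,k),1)) ∈ M} is a perfect matching of H'(Ḡ) of the same weight w; consequently maximum-weight perfect matchings of H'(G) and H'(Ḡ) are in weight-preserving bijection, and each agent's utility in the corresponding executions is preserved. -/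
/-- The adjacency of the trading graph for reports with demand sets `Dm` and supply
sets `Sp`: a demand edge from agent `i` to each item `j ∈ Dm i`, and a supply edge
from each item `j ∈ Sp i` to agent `i`. -/
def TAdj {N M : Type} (Dm Sp : N → Finset M) : (N ⊕ M) → (N ⊕ M) → Prop
  | .inl i, .inr j => j ∈ Dm i
  | .inr j, .inl i => j ∈ Sp i
  | _, _ => False

/-- The edges of the trading graph. -/
abbrev TEdge {N M : Type} (Dm Sp : N → Finset M) :=
  {p : (N ⊕ M) × (N ⊕ M) // TAdj Dm Sp p.1 p.2}

theorem tadj_rev {N M : Type} (Dm Sp : N → Finset M) (u v : N ⊕ M)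
    (h : TAdj Dm Sp u v) : TAdj Sp Dm v u := by
  cases u <;> cases v <;> simpa [TAdj] using h

/-- Reversing every edge of the trading graph yields the trading graph of the
reversed instance (demands and supplies swapped). -/
def trev {N M : Type} (Dm Sp : N → Finset M) : TEdge Dm Sp ≃ TEdge Sp Dm where
  toFun e := ⟨(e.val.2, e.val.1), tadj_rev Dm Sp _ _ e.2⟩
  invFun e := ⟨(e.val.2, e.val.1), tadj_rev Sp Dm _ _ e.2⟩
  left_inv e := rfl
  right_inv e := rfl

/-- Two trading-graph edges are consecutive if the head of the first is the tail of
the second. -/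
def TConsec {N M : Type} {Dm Sp : N → Finset M} (e f : TEdge Dm Sp) : Prop :=
  e.val.2 = f.val.1

/-- A perfect matching of the bipartite edge-graph `H'(G)`, encoded by the bijection
sending each `(e,0)` to its partner `(m e, 1)`: every edge is matched to its own
copy or to a consecutive edge. -/
def TIsPM {N M : Type} {Dm Sp : N → Finset M} (m : TEdge Dm Sp ≃ TEdge Dm Sp) : Prop :=
  ∀ e, m e = e ∨ TConsec e (m e)

/-- The perturbation key of an edge: the (agent, item) pair underlying it, the same
for a demand edge `(i,j)` and for the supply edge `(j,i)`. -/
def tkey {N M : Type} {Dm Sp : N → Finset M} : TEdge Dm Sp → N × M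
  | ⟨(Sum.inl i, Sum.inr j), _⟩ => (i, j)
  | ⟨(Sum.inr j, Sum.inl i), _⟩ => (i, j)
  | ⟨(Sum.inl _, Sum.inl _), h⟩ => absurd h (by simp [TAdj])
  | ⟨(Sum.inr _, Sum.inr _), h⟩ => absurd h (by simp [TAdj])

/-- The perturbed weight of a perfect matching of `H'(G)`: each edge matched to a
consecutive edge contributes `1 + 2^{-π(key)}`. -/
noncomputable def tweight {N M : Type} {Dm Sp : N → Finset M} (π : N × M → ℕ)
    (m : TEdge Dm Sp ≃ TEdge Dm Sp) : ℝ :=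
  ∑ᶠ e ∈ {e : TEdge Dm Sp | m e ≠ e}, (1 + (2 : ℝ) ^ (-(π (tkey e) : ℤ)))

/-- The utility of agent `i` derived from a matching: the number of his demand edges
matched to a consecutive edge (items received). -/
noncomputable def tutil {N M : Type} {Dm Sp : N → Finset M}
    (m : TEdge Dm Sp ≃ TEdge Dm Sp) (i : N) : ℕ :=
  Set.ncard {e : TEdge Dm Sp | (∃ j : M, e.val = (Sum.inl i, Sum.inr j)) ∧ m e ≠ e}

/-- The reversed matching `M̄`: `(((i,j),0),((j,k),1)) ∈ M` becomes
`(((k,j),0),((j,i),1)) ∈ M̄`. -/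
def tmbar {N M : Type} {Dm Sp : N → Finset M} (m : TEdge Dm Sp ≃ TEdge Dm Sp) :
    TEdge Sp Dm ≃ TEdge Sp Dm :=
  (((trev Dm Sp).symm.trans m.symm).trans (trev Dm Sp))


/-!
Reversing every edge of the trading graph is a bijection `trev` between the edges of `G` and
of `Ḡ`, and the reversed matching is `trev ∘ m⁻¹ ∘ trev⁻¹`. If `e` is matched to a consecutive
edge `m e`, then `trev (m e)` is matched to the consecutive edge `trev e`, so `M̄` is again a
perfect matching; it moves exactly the reversals of the edges moved by `m`, and reversal keeps
the perturbation key, so the weights agree. For the utilities: the demand edges of agent `i`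
in `Ḡ` moved by `M̄` are the reversals of the supply edges into `i` moved by `m`, and `m`
maps the moved edges entering a vertex bijectively onto the moved edges leaving it.
-/

section Reversal

variable {N M : Type} {Dm Sp : N → Finset M}

@[simp]
lemma trev_val (e : TEdge Dm Sp) : (trev Dm Sp e).val = (e.val.2, e.val.1) := rfl

lemma tkey_trev (e : TEdge Dm Sp) : tkey (trev Dm Sp e) = tkey e := by
  obtain ⟨⟨u, v⟩, h⟩ := e
  cases u <;> cases v <;> rfl

lemma fst_eq_inl_iff (e : TEdge Dm Sp) (i : N) :
    e.val.1 = Sum.inl i ↔ ∃ j, e.val = (Sum.inl i, Sum.inr j) := by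
  obtain ⟨⟨u, v⟩, h⟩ := e
  constructor
  · rintro rfl
    cases v with
    | inl => exact absurd h (by simp [TAdj])
    | inr j => exact ⟨j, rfl⟩
  · rintro ⟨j, hj⟩
    exact congrArg Prod.fst hj

lemma tmbar_trev (m : TEdge Dm Sp ≃ TEdge Dm Sp) (e : TEdge Dm Sp) :
    tmbar m (trev Dm Sp e) = trev Dm Sp (m.symm e) := by
  simp [tmbar]

lemma tmbar_trev_ne_iff (m : TEdge Dm Sp ≃ TEdge Dm Sp) (e : TEdge Dm Sp) :
    tmbar m (trev Dm Sp e) ≠ trev Dm Sp e ↔ m e ≠ e := by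
  rw [tmbar_trev, (trev Dm Sp).injective.ne_iff, Ne, Equiv.symm_apply_eq, eq_comm]

lemma setOf_and_tmbar_ne (m : TEdge Dm Sp ≃ TEdge Dm Sp) (P : TEdge Sp Dm → Prop) :
    {e' | P e' ∧ tmbar m e' ≠ e'} = trev Dm Sp '' {e | P (trev Dm Sp e) ∧ m e ≠ e} := by
  ext e'
  obtain ⟨e, rfl⟩ := (trev Dm Sp).surjective e'
  simp only [Set.mem_ofPred_eq, (trev Dm Sp).injective.mem_set_image, tmbar_trev_ne_iff]

lemma tIsPM_tmbar {m : TEdge Dm Sp ≃ TEdge Dm Sp} (hm : TIsPM m) : TIsPM (tmbar m) := by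
  intro e'
  obtain ⟨e, rfl⟩ := (trev Dm Sp).surjective e'
  rw [tmbar_trev]
  rcases hm (m.symm e) with hfix | hconsec
  · left
    rw [Equiv.apply_symm_apply] at hfix
    rw [← hfix]
  · right
    rw [Equiv.apply_symm_apply] at hconsec
    exact hconsec.symm

lemma TIsPM.image_setOf_snd_eq {m : TEdge Dm Sp ≃ TEdge Dm Sp} (hm : TIsPM m)
    (v : N ⊕ M) :
    m '' {e | e.val.2 = v ∧ m e ≠ e} = {e | e.val.1 = v ∧ m e ≠ e} := by
  ext f
  obtain ⟨e, rfl⟩ := m.surjective f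
  simp only [Set.mem_ofPred_eq, m.injective.mem_set_image, m.injective.ne_iff]
  refine and_congr_left fun hne => ?_
  rw [(hm e).resolve_left hne]

lemma tutil_eq_ncard (m : TEdge Dm Sp ≃ TEdge Dm Sp) (i : N) :
    tutil m i = Set.ncard {e | e.val.1 = Sum.inl i ∧ m e ≠ e} := by
  simp only [tutil, fst_eq_inl_iff]

lemma tweight_tmbar (π : N × M → ℕ) (m : TEdge Dm Sp ≃ TEdge Dm Sp) :
    tweight π (tmbar m) = tweight π m := by
  have hmoved := setOf_and_tmbar_ne m (fun _ => True)
  simp only [true_and] at hmoved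
  rw [tweight, hmoved, finsum_mem_image (trev Dm Sp).injective.injOn]
  simp only [tweight, tkey_trev]

lemma tutil_tmbar {m : TEdge Dm Sp ≃ TEdge Dm Sp} (hm : TIsPM m) (i : N) :
    tutil (tmbar m) i = tutil m i := by
  rw [tutil_eq_ncard, tutil_eq_ncard, setOf_and_tmbar_ne,
    Set.ncard_image_of_injective _ (trev Dm Sp).injective]
  simp only [trev_val]
  rw [← hm.image_setOf_snd_eq, Set.ncard_image_of_injective _ m.injective]

end Reversal

theorem stmt10_general {N M : Type}
    (Dm Sp : N → Finset M) (π : N × M → ℕ)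
    (m : TEdge Dm Sp ≃ TEdge Dm Sp) (hm : TIsPM m) :
    TIsPM (tmbar m) ∧
    tweight π (tmbar m) = tweight π m ∧
    ∀ i : N, tutil (tmbar m) i = tutil m i :=
  ⟨tIsPM_tmbar hm, tweight_tmbar π m, tutil_tmbar hm⟩

/-- If `m` is a perfect matching of `H'(G)` then the reversed
matching is a perfect matching of `H'(Ḡ)` of the same perturbed weight, and each
agent's utility in the corresponding executions is preserved. -/
theorem stmt10 {N M : Type} [Fintype N] [Fintype M] [DecidableEq N] [DecidableEq M]
    (Dm Sp : N → Finset M) (π : N × M → ℕ)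
    (hπ : Function.Injective π) (hπ1 : ∀ p, 1 ≤ π p)
    (m : TEdge Dm Sp ≃ TEdge Dm Sp) (hm : TIsPM m) :
    TIsPM (tmbar m) ∧
    tweight π (tmbar m) = tweight π m ∧
    ∀ i : N, tutil (tmbar m) i = tutil m i :=
  stmt10_general Dm Sp π m hm
end

section
/- In the greedy lower-bound instance G_d (d ≥ 2, parameter l ≥ 2), after the giant cycle C_all through all d·l agents and d·l items is executed, no further cycle exists in the updated trading graph; hence the greedy algorithm performs exactly d·l exchanges, while the optimal execution performs l + (d−1)·l² exchanges, giving a ratio (1 + (d−1)l)/d that tends to l as d → ∞. -/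
variable {N M : Type} [DecidableEq N] [DecidableEq M]

/-- Agents (and items) of the greedy lower-bound instance `G_d`: agent `(y,k)` is
`i^k_y` (item `(y,k)` is `j^k_y`). -/
abbrev GAg (d l : ℕ) := Fin d × Fin l

/-- The item an agent demands in the next group: `j^k_{y+1}`, wrapping to
`j^{(k mod l)+1}₁` for the last group. -/
def gnxt (d l : ℕ) [NeZero d] [NeZero l] (p : GAg d l) : GAg d l :=
  if p.1.val + 1 < d then (p.1 + 1, p.2) else (p.1 + 1, p.2 + 1)

/-- Supplies: agent `i^k_y` owns exactly `j^k_y`. -/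
def GS (d l : ℕ) : GAg d l → Finset (GAg d l) := fun a => {a}

/-- Demands: `i^k_1` demands `{j^k_2}`; for `y ≥ 2`, `i^k_y` demands
`(M_y \ {j^k_y}) ∪ {next}`. -/
def GD (d l : ℕ) [NeZero d] [NeZero l] : GAg d l → Finset (GAg d l) := fun p =>
  if p.1.val = 0 then {gnxt d l p}
  else insert (gnxt d l p) ((Finset.univ.filter fun q : GAg d l => q.1 = p.1).erase p)

/-- The giant cycle `C_all` through all `d·l` agents, along the next-group demand
edges. -/
def CAll (d l : ℕ) [NeZero d] [NeZero l] : List (GAg d l × GAg d l) :=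
  (List.finRange l).flatMap fun k =>
    (List.finRange d).map fun y => (((y, k) : GAg d l), gnxt d l (y, k))

/-!
Executing `C_all` lets every agent give his own item and receive his next-group item. Afterwards
agent `i^k_y` owns only that next-group item, while his remaining demands lie in his own group
`M_y` (and are empty for `y = 1`). So an item demanded by an agent of group `y` is owned by an
agent of group `y - 1`: along any further cycle the group index would strictly decrease, which is
impossible.

For the optimal execution, the agents of the groups `N_2, …, N_d` first rotate their items
`l - 1` times within the group, so that each collects every other item of his group. Then
`i^k_y` holds `j^{k-1}_y` for `y ≥ 2` while the agents of `N_1` still hold their own items, so the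
item that `i^k_y` still demands is held by `i^{k+1}_{y+1}` (indices cyclic). Trading along the
cycles of this derangement exchanges `d·l` further items, `(d - 1)·l·(l - 1) + d·l = l + (d - 1)·l²`
in total.
-/

open Finset

theorem TState.ext {α β : Type} {s t : TState α β} (hown : s.own = t.own)
    (hdem : s.dem = t.dem) : s = t := by
  cases s; cases t; congr

def TState.trade (s : TState N M) (S : Finset N) (give recv : N → M) : TState N M where
  own i := if i ∈ S then insert (recv i) ((s.own i).erase (give i)) else s.own i
  dem i := if i ∈ S then (s.dem i).erase (recv i) else s.dem i

@[simp]
theorem TState.trade_empty (s : TState N M) (give recv : N → M) : s.trade ∅ give recv = s :=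
  TState.ext (by funext i; simp [trade]) (by funext i; simp [trade])

theorem TState.trade_trade (s : TState N M) {S T : Finset N} (h : Disjoint S T)
    (give recv : N → M) :
    (s.trade S give recv).trade T give recv = s.trade (S ∪ T) give recv := by
  refine TState.ext (funext fun i => ?_) (funext fun i => ?_) <;>
  by_cases hT : i ∈ T <;> simp [trade, hT, Finset.disjoint_right.1 h]

def tradeCycle {α β : Type} (A : List α) (recv : α → β) : List (α × β) :=
  A.map fun a => (a, recv a)

theorem mem_tradeCycle {α β : Type} {A : List α} {recv : α → β} {i : α} {j : β} :
    (i, j) ∈ tradeCycle A recv ↔ i ∈ A ∧ j = recv i := by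
  simp only [tradeCycle, List.mem_map, Prod.mk.injEq]
  constructor
  · rintro ⟨a, ha, rfl, rfl⟩; exact ⟨ha, rfl⟩
  · rintro ⟨ha, rfl⟩; exact ⟨i, ha, rfl, rfl⟩

-- `A.map recv = (A.map give).rotate 1` says that agent `A[t]` receives what `A[t+1]` gives.
theorem gives_tradeCycle {α β : Type} {A : List α} {recv give : α → β}
    (h : A.map recv = (A.map give).rotate 1) : gives (tradeCycle A recv) = tradeCycle A give := by
  rcases eq_or_ne A [] with rfl | hA
  · rfl
  have hsnd : ((tradeCycle A recv).rotate ((tradeCycle A recv).length - 1)).map Prod.snd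
      = A.map give := by
    have hlen : 1 + (A.length - 1) = (A.map give).length := by
      have := List.length_pos_iff.2 hA
      simp only [List.length_map]; omega
    rw [tradeCycle, ← List.map_rotate, List.map_map, List.length_map, List.map_rotate]
    simp only [Function.comp_def, h, List.rotate_rotate, hlen, List.rotate_length]
  rw [gives, hsnd]
  simpa [tradeCycle, Function.comp_def] using List.zip_map' (l := A) (f := id) (g := give)

theorem stepCycle_tradeCycle {s : TState N M} {A : List N} {recv give : N → M}
    (h : A.map recv = (A.map give).rotate 1) :
    stepCycle s (tradeCycle A recv) = s.trade A.toFinset give recv := by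
  refine TState.ext (funext fun i => ?_) (funext fun i => ?_) <;> ext j <;>
    by_cases hi : i ∈ A <;>
    simp [stepCycle, TState.trade, gives_tradeCycle h, mem_tradeCycle, hi] <;> tauto

theorem validCycle_tradeCycle {α β : Type} {s : TState α β} {A : List α} {recv give : α → β}
    (hne : A ≠ []) (hA : A.Nodup) (hrecv : (A.map recv).Nodup)
    (h : A.map recv = (A.map give).rotate 1)
    (hdem : ∀ i ∈ A, recv i ∈ s.dem i) (hown : ∀ i ∈ A, give i ∈ s.own i) :
    ValidCycle s (tradeCycle A recv) := by
  refine ⟨by simpa [tradeCycle] using hne, by simpa [tradeCycle, Function.comp_def] using hA,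
    by simpa [tradeCycle, Function.comp_def] using hrecv, ?_, ?_⟩
  · rintro ⟨i, j⟩ hij
    obtain ⟨hi, rfl⟩ := mem_tradeCycle.1 hij
    exact hdem i hi
  · rintro ⟨i, j⟩ hij
    rw [gives_tradeCycle h] at hij
    obtain ⟨hi, rfl⟩ := mem_tradeCycle.1 hij
    exact hown i hi

theorem exists_mem_gives_of_mem {α β : Type} {c : List (α × β)} {p : α × β} (hp : p ∈ c) :
    ∃ q ∈ c, (q.1, p.2) ∈ gives c := by
  have hlen : ((c.rotate (c.length - 1)).map Prod.snd).length = (c.map Prod.fst).length := by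
    simp
  have hsnd : p.2 ∈ (gives c).map Prod.snd := by
    rw [gives, List.map_snd_zip hlen.le, List.mem_map]
    exact ⟨p, List.mem_rotate.2 hp, rfl⟩
  obtain ⟨⟨i, j⟩, hij, rfl⟩ := List.mem_map.1 hsnd
  have hi : i ∈ c.map Prod.fst := by
    rw [← List.map_fst_zip hlen.ge]
    exact List.mem_map_of_mem (f := Prod.fst) hij
  obtain ⟨q, hq, rfl⟩ := List.mem_map.1 hi
  exact ⟨q, hq, hij⟩

theorem not_validCycle_of_owner_lt {α β : Type} {s : TState α β} (φ : α → ℕ)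
    (hφ : ∀ i q j, j ∈ s.dem i → j ∈ s.own q → φ q < φ i) (c : List (α × β)) :
    ¬ ValidCycle s c := by
  rintro ⟨hne, -, -, hdem, hown⟩
  obtain ⟨p, hp⟩ := List.exists_mem_of_ne_nil c hne
  induction hn : φ p.1 using Nat.strong_induction_on generalizing p with
  | _ n ih =>
    obtain ⟨q, hq, hgive⟩ := exists_mem_gives_of_mem hp
    exact ih _ (hn ▸ hφ _ _ _ (hdem p hp) (hown _ hgive)) q hq rfl

theorem exchanges_cons {α β : Type} (c : List (α × β)) (r : List (List (α × β))) :
    exchanges (c :: r) = c.length + exchanges r := by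
  simp [exchanges]

theorem exchanges_append {α β : Type} (r₁ r₂ : List (List (α × β))) :
    exchanges (r₁ ++ r₂) = exchanges r₁ + exchanges r₂ := by
  simp [exchanges]

theorem exchanges_le_card_of_staticExec {α β : Type} [Fintype β] {r : List (List (α × β))}
    (hr : StaticExec r) : exchanges r ≤ Fintype.card β := by
  have h := hr.length_le_card
  rwa [List.length_map, List.length_flatten] at h

theorem validExec_append {s : TState N M} {r₁ r₂ : List (List (N × M))} :
    ValidExec s (r₁ ++ r₂) ↔ ValidExec s r₁ ∧ ValidExec (r₁.foldl stepCycle s) r₂ := by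
  induction r₁ generalizing s with
  | nil => simp [ValidExec]
  | cons c r ih => simp [ValidExec, ih, and_assoc]

theorem List.map_iterate_self {α : Type*} (f : α → α) (a : α) (n : ℕ) :
    (List.iterate f a n).map f = List.iterate f (f a) n := by
  induction n generalizing a with
  | zero => rfl
  | succ n ih => simp [List.iterate, ih]

namespace Equiv.Perm

variable {α : Type*} [Fintype α] [DecidableEq α]

theorem map_toList (σ : Perm α) (x : α) : (σ.toList x).map σ = (σ.toList x).rotate 1 := by
  have h := σ.toList_pow_apply_eq_rotate x 1
  rw [pow_one] at h
  rw [← h, toList, toList, cycleOf_self_apply, List.map_iterate_self]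

theorem mem_of_mem_toList {σ : Perm α} {S : Set α} (hS : Set.MapsTo σ S S) {x i : α}
    (hx : x ∈ S) (hi : i ∈ σ.toList x) : i ∈ S := by
  obtain ⟨m, -, rfl⟩ := List.mem_iterate.1 hi
  exact hS.iterate m hx

end Equiv.Perm

-- Agent `i` gives `g i` and receives `g (σ i)` from agent `σ i`; one cycle per orbit of `σ`.
theorem exists_validExec_trade [Fintype N] (σ : Equiv.Perm N) {g : N → M}
    (hg : Function.Injective g) (S : Finset N) (hS : Set.MapsTo σ S S) (hσ : ∀ i ∈ S, σ i ≠ i)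
    (s : TState N M) (hown : ∀ i ∈ S, g i ∈ s.own i) (hdem : ∀ i ∈ S, g (σ i) ∈ s.dem i) :
    ∃ r, ValidExec s r ∧ exchanges r = #S ∧ r.foldl stepCycle s = s.trade S g (g ∘ σ) := by
  induction S using Finset.strongInduction generalizing s with
  | H S ih =>
  rcases S.eq_empty_or_nonempty with rfl | ⟨x, hx⟩
  · exact ⟨[], trivial, rfl, (s.trade_empty _ _).symm⟩
  set L := σ.toList x with hL
  have hxL : x ∈ L :=
    Equiv.Perm.mem_toList_iff.2 ⟨.refl σ x, Equiv.Perm.mem_support.2 (hσ x hx)⟩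
  have hLS : L.toFinset ⊆ S := fun i hi =>
    Equiv.Perm.mem_of_mem_toList hS hx (List.mem_toFinset.1 hi)
  have hrot : L.map (g ∘ σ) = (L.map g).rotate 1 := by
    rw [← List.map_map, Equiv.Perm.map_toList, List.map_rotate]
  have hc : ValidCycle s (tradeCycle L (g ∘ σ)) :=
    validCycle_tradeCycle (List.ne_nil_of_mem hxL) (σ.nodup_toList x)
      ((σ.nodup_toList x).map (hg.comp σ.injective)) hrot
      (fun i hi => hdem i (hLS (List.mem_toFinset.2 hi)))
      (fun i hi => hown i (hLS (List.mem_toFinset.2 hi)))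
  have hkeep : ∀ i ∈ S \ L.toFinset, (s.trade L.toFinset g (g ∘ σ)).own i = s.own i ∧
      (s.trade L.toFinset g (g ∘ σ)).dem i = s.dem i := fun i hi => by
    simp [TState.trade, List.mem_toFinset.not.1 (mem_sdiff.1 hi).2]
  have hσL : ∀ i, σ i ∈ L ↔ i ∈ L := fun i => by
    simp only [hL, Equiv.Perm.mem_toList_iff, Equiv.Perm.sameCycle_apply_right]
  obtain ⟨r, hr, hex, hfold⟩ := ih (S \ L.toFinset)
    (sdiff_ssubset hLS ⟨x, List.mem_toFinset.2 hxL⟩)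
    (fun i hi => by
      simp only [coe_sdiff, Set.mem_sdiff, mem_coe, List.mem_toFinset] at hi ⊢
      exact ⟨hS hi.1, (hσL i).not.2 hi.2⟩)
    (fun i hi => hσ i (mem_sdiff.1 hi).1) _
    (fun i hi => (hkeep i hi).1 ▸ hown i (mem_sdiff.1 hi).1)
    (fun i hi => (hkeep i hi).2 ▸ hdem i (mem_sdiff.1 hi).1)
  refine ⟨tradeCycle L (g ∘ σ) :: r, ⟨hc, by rwa [stepCycle_tradeCycle hrot]⟩, ?_, ?_⟩
  · rw [exchanges_cons, hex, tradeCycle, List.length_map,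
      ← List.toFinset_card_of_nodup (σ.nodup_toList x), add_comm,
      card_sdiff_add_card_eq_card hLS]
  · rw [List.foldl_cons, stepCycle_tradeCycle hrot, hfold, TState.trade_trade _ disjoint_sdiff,
      union_sdiff_of_subset hLS]

theorem List.rotate_one_map_range {α : Type*} (e : ℕ → α) {n : ℕ} (hn : e n = e 0) :
    ((List.range n).map e).rotate 1 = (List.range n).map fun t => e (t + 1) := by
  cases n with
  | zero => rfl
  | succ n =>
    conv_rhs => rw [List.range_succ, List.map_append, List.map_singleton, hn]
    rw [List.range_succ_eq_map, List.map_cons, List.map_map, List.rotate_cons_succ,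
      List.rotate_zero]
    rfl

theorem List.map_range_eq_ofFn {α : Type*} (n : ℕ) (f : ℕ → α) :
    (List.range n).map f = List.ofFn fun i : Fin n => f i :=
  List.ext_getElem (by simp) (by simp)

namespace Fin

open Fin.NatCast

variable {n : ℕ} [NeZero n]

theorem natCast_inj_of_lt {a b : ℕ} (ha : a < n) (hb : b < n) : (a : Fin n) = b ↔ a = b := by
  rw [Fin.ext_iff, Fin.val_natCast, Fin.val_natCast, Nat.mod_eq_of_lt ha, Nat.mod_eq_of_lt hb]

theorem one_ne_zero_of_one_lt (hn : 1 < n) : (1 : Fin n) ≠ 0 := by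
  simpa using (natCast_inj_of_lt hn (Nat.zero_lt_of_lt hn)).not.2 Nat.one_ne_zero

theorem add_one_ne_self_of_ne_zero {a : Fin n} (ha : a ≠ 0) : a + 1 ≠ a := by
  intro h
  have h1 : (1 : Fin n) = 0 := by simpa using h
  obtain ⟨n, rfl⟩ := Nat.exists_eq_add_one_of_ne_zero (NeZero.ne n)
  rw [Fin.one_eq_zero_iff] at h1
  obtain rfl : n = 0 := by omega
  exact ha (Fin.eq_zero a)

theorem val_lt_of_add_one_eq {a b : Fin n} (h : a + 1 = b) (hb : b.val ≠ 0) : a.val < b.val := by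
  obtain ⟨n, rfl⟩ := Nat.exists_eq_add_one_of_ne_zero (NeZero.ne n)
  subst h
  rw [Fin.val_add_one] at hb ⊢
  split_ifs at hb ⊢ <;> omega

end Fin

theorem tendsto_one_add_sub_one_mul_div (c : ℝ) :
    Filter.Tendsto (fun m : ℕ => (1 + ((m : ℝ) - 1) * c) / m) Filter.atTop (nhds c) := by
  have h : Filter.Tendsto (fun m : ℕ => c + (1 - c) / m) Filter.atTop (nhds (c + 0)) :=
    tendsto_const_nhds.add (tendsto_const_nhds.div_atTop tendsto_natCast_atTop_atTop)
  rw [add_zero] at h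
  refine h.congr' ((Filter.eventually_ne_atTop 0).mono fun m hm => ?_)
  field_simp
  ring

section Instance

open Fin.NatCast

variable {d l : ℕ} [NeZero d]

variable (d l) in
def activeAgents : Finset (GAg d l) := ({0}ᶜ : Finset (Fin d)) ×ˢ univ

theorem mem_activeAgents {i : GAg d l} : i ∈ activeAgents d l ↔ i.1 ≠ 0 := by
  simp [activeAgents]

theorem card_activeAgents : #(activeAgents d l) = (d - 1) * l := by
  simp [activeAgents, card_compl]

variable [NeZero l]

theorem gnxt_fst (i : GAg d l) : (gnxt d l i).1 = i.1 + 1 := by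
  unfold gnxt; split_ifs <;> rfl

theorem gnxt_mem_GD (i : GAg d l) : gnxt d l i ∈ GD d l i := by
  unfold GD
  split_ifs <;> simp

theorem fst_eq_of_mem_GD_erase {i j : GAg d l} (hj : j ∈ (GD d l i).erase (gnxt d l i)) :
    i.1.val ≠ 0 ∧ j.1 = i.1 := by
  unfold GD at hj
  split_ifs at hj with hi
  · simp at hj
  · simp only [mem_erase, mem_insert, mem_filter, mem_univ, true_and] at hj
    exact ⟨hi, (hj.2.resolve_left hj.1).2⟩

-- `C_all` visits the agents in the order `agentAt 0, agentAt 1, …, agentAt (l * d - 1)`.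
variable (d l) in
def agentAt (t : ℕ) : GAg d l := ((t : Fin d), ((t / d : ℕ) : Fin l))

theorem gnxt_agentAt (t : ℕ) : gnxt d l (agentAt d l t) = agentAt d l (t + 1) := by
  obtain ⟨d', rfl⟩ := Nat.exists_eq_add_one_of_ne_zero (NeZero.ne d)
  have hmod : t % (d' + 1) < d' + 1 := Nat.mod_lt _ (Nat.succ_pos d')
  have hdvd : d' + 1 ∣ t + 1 ↔ ¬ t % (d' + 1) + 1 < d' + 1 := by
    rw [Nat.dvd_iff_mod_eq_zero, Nat.succ_mod_succ_eq_zero_iff]; omega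
  simp only [gnxt, agentAt, Fin.val_natCast, Nat.succ_div, hdvd, Nat.cast_add, Nat.cast_one]
  by_cases h : t % (d' + 1) + 1 < d' + 1 <;> simp [h]

theorem agentAt_mul : agentAt d l (l * d) = agentAt d l 0 := by
  simp [agentAt, Nat.mul_div_cancel _ (NeZero.pos d)]

theorem agentAt_mul_add (k : ℕ) {y : ℕ} (hy : y < d) :
    agentAt d l (k * d + y) = ((y : Fin d), (k : Fin l)) := by
  simp [agentAt, Nat.add_comm (k * d), Nat.add_mul_div_right _ _ (NeZero.pos d),
    Nat.div_eq_of_lt hy]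

variable (d l) in
def allAgents : List (GAg d l) := (List.range (l * d)).map (agentAt d l)

variable (d l) in
theorem CAll_eq : CAll d l = tradeCycle (allAgents d l) (gnxt d l) := by
  rw [tradeCycle, allAgents, List.map_map, List.map_range_eq_ofFn, List.ofFn_mul, CAll,
    List.flatMap_def, List.ofFn_eq_map]
  congr 1
  refine List.map_congr_left fun k _ => ?_
  rw [List.ofFn_eq_map]
  refine List.map_congr_left fun y _ => ?_
  simp [agentAt_mul_add k y.isLt]

theorem mem_allAgents (a : GAg d l) : a ∈ allAgents d l := by
  refine List.mem_map.2 ⟨a.2 * d + a.1, List.mem_range.2 ?_, ?_⟩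
  · nlinarith [a.1.isLt, a.2.isLt]
  · rw [agentAt_mul_add _ a.1.isLt]
    simp

theorem nodup_allAgents : (allAgents d l).Nodup := by
  rw [← Multiset.coe_nodup, ← Multiset.toFinset_card_eq_card_iff_nodup]
  have huniv : (allAgents d l : Multiset (GAg d l)).toFinset = univ :=
    eq_univ_of_forall fun a => by simp [mem_allAgents]
  rw [huniv, card_univ, Fintype.card_prod, Fintype.card_fin, Fintype.card_fin, Multiset.coe_card,
    allAgents, List.length_map, List.length_range, mul_comm]

theorem map_gnxt_allAgents :
    (allAgents d l).map (gnxt d l) = ((allAgents d l).map id).rotate 1 := by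
  rw [allAgents, List.map_map, List.map_id, List.rotate_one_map_range _ agentAt_mul]
  exact List.map_congr_left fun t _ => gnxt_agentAt t

variable (d l) in
theorem validCycle_CAll : ValidCycle ⟨GS d l, GD d l⟩ (CAll d l) := by
  rw [CAll_eq]
  refine validCycle_tradeCycle (List.ne_nil_of_mem (mem_allAgents 0)) nodup_allAgents ?_
    map_gnxt_allAgents (fun i _ => gnxt_mem_GD i) (fun i _ => by simp [GS])
  rw [map_gnxt_allAgents, List.map_id]
  exact List.nodup_rotate.2 nodup_allAgents

variable (d l) in
theorem stepCycle_CAll :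
    stepCycle ⟨GS d l, GD d l⟩ (CAll d l) = TState.trade ⟨GS d l, GD d l⟩ univ id (gnxt d l) := by
  rw [CAll_eq, stepCycle_tradeCycle map_gnxt_allAgents]
  congr
  exact eq_univ_of_forall fun a => List.mem_toFinset.2 (mem_allAgents a)

variable (d l) in
theorem not_validCycle_after_CAll (c : List (GAg d l × GAg d l)) :
    ¬ ValidCycle (stepCycle ⟨GS d l, GD d l⟩ (CAll d l)) c := by
  refine not_validCycle_of_owner_lt (fun i => i.1.val) (fun i q j hj hq => ?_) c
  simp only [stepCycle_CAll, TState.trade, mem_univ, if_true, GS, id, erase_singleton,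
    insert_empty, mem_singleton] at hj hq
  subst hq
  obtain ⟨hi, hq⟩ := fst_eq_of_mem_GD_erase hj
  exact Fin.val_lt_of_add_one_eq (gnxt_fst q ▸ hq) hi

-- The item agent `i` holds after `t` rounds of rotation inside the groups `N_2, …, N_d`
-- (group index `0` is `N_1`).
variable (d l) in
def holding (t : ℕ) (i : GAg d l) : GAg d l := if i.1 = 0 then i else (i.1, i.2 + t)

theorem holding_injective (t : ℕ) : Function.Injective (holding d l t) := by
  intro a b h
  have hfst : a.1 = b.1 := by
    have h1 := congrArg Prod.fst h
    unfold holding at h1; split_ifs at h1 <;> exact h1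
  unfold holding at h
  rw [hfst] at h
  split_ifs at h with hb
  · exact h
  · exact Prod.ext hfst (add_right_cancel (congrArg Prod.snd h))

theorem holding_add_right_zero_one {t : ℕ} {i : GAg d l} (hi : i.1 ≠ 0) :
    holding d l t (i + (0, 1)) = holding d l (t + 1) i := by
  simp only [holding, Prod.fst_add, Prod.snd_add, add_zero, if_neg hi]
  rw [Nat.cast_succ, add_right_comm, add_assoc]

theorem holding_pred_add_right_one_one (i : GAg d l) :
    holding d l (l - 1) (i + (1, 1)) = gnxt d l i := by
  obtain ⟨d, rfl⟩ := Nat.exists_eq_add_one_of_ne_zero (NeZero.ne d)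
  obtain ⟨l, rfl⟩ := Nat.exists_eq_add_one_of_ne_zero (NeZero.ne l)
  simp only [holding, gnxt, Prod.fst_add, Prod.snd_add, Nat.add_sub_cancel]
  by_cases hi : i.1 = Fin.last d
  · simp [hi, Prod.ext_iff]
  · have hlt : i.1.val < d := Fin.val_lt_last hi
    have hne : i.1 + 1 ≠ 0 := fun h => by
      have := congrArg Fin.val h
      rw [Fin.val_add_one, if_neg hi] at this
      simp at this
    simp [hne, hlt, add_assoc, add_comm (1 : Fin (l + 1))]

variable (d l) in
def RoundInv (t : ℕ) (s : TState (GAg d l) (GAg d l)) : Prop :=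
  (∀ i, holding d l t i ∈ s.own i) ∧ (∀ i, gnxt d l i ∈ s.dem i) ∧
    ∀ i : GAg d l, i.1 ≠ 0 → ∀ m, t < m → m < l → (i.1, i.2 + (m : Fin l)) ∈ s.dem i

theorem roundInv_zero : RoundInv d l 0 ⟨GS d l, GD d l⟩ := by
  refine ⟨fun i => by simp [holding, GS], gnxt_mem_GD, fun i hi m hm hml => ?_⟩
  have hm0 : (m : Fin l) ≠ 0 := by
    rw [← Nat.cast_zero, Ne, Fin.natCast_inj_of_lt hml (NeZero.pos l)]; omega
  have hival : i.1.val ≠ 0 := Fin.val_ne_iff.2 hi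
  simp [GD, hival, Prod.ext_iff, hm0]

theorem RoundInv.trade {t : ℕ} {s : TState (GAg d l) (GAg d l)} (h : RoundInv d l t s)
    (ht : t + 1 < l) :
    RoundInv d l (t + 1)
      (s.trade (activeAgents d l) (holding d l t) (holding d l t ∘ Equiv.addRight (0, 1))) := by
  obtain ⟨hown, hgnxt, hrest⟩ := h
  refine ⟨fun i => ?_, fun i => ?_, fun i hi m hm hml => ?_⟩ <;>
    by_cases hS : i ∈ activeAgents d l <;>
    simp only [TState.trade, hS, if_true, if_false, Function.comp_apply, Equiv.coe_addRight]
  all_goals rw [mem_activeAgents] at hS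
  · rw [holding_add_right_zero_one hS]; exact mem_insert_self _ _
  · simp only [ne_eq, not_not] at hS
    simpa [holding, hS] using hown i
  · rw [holding_add_right_zero_one hS]
    refine Finset.mem_erase.2 ⟨fun he => ?_, hgnxt i⟩
    have h1 := congrArg Prod.fst he
    rw [gnxt_fst, holding, if_neg hS] at h1
    exact Fin.add_one_ne_self_of_ne_zero hS h1
  · exact hgnxt i
  · rw [holding_add_right_zero_one hS]
    refine Finset.mem_erase.2 ⟨fun he => ?_, hrest i hi m (by omega) hml⟩
    rw [holding, if_neg hS, Prod.mk.injEq] at he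
    have := (Fin.natCast_inj_of_lt hml ht).1 (add_left_cancel he.2)
    omega
  · exact absurd hi hS

theorem exists_validExec_round {t : ℕ} {s : TState (GAg d l) (GAg d l)} (h : RoundInv d l t s)
    (ht : t + 1 < l) : ∃ r, ValidExec s r ∧ exchanges r = (d - 1) * l ∧
      RoundInv d l (t + 1) (r.foldl stepCycle s) := by
  obtain ⟨r, hr, hex, hfold⟩ := exists_validExec_trade (Equiv.addRight (0, 1))
    (holding_injective t) (activeAgents d l)
    (fun i hi => by simpa [mem_activeAgents] using hi)
    (fun i _ => add_ne_left.2 fun h : ((0, 1) : GAg d l) = 0 =>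
      Fin.one_ne_zero_of_one_lt (by omega) (congrArg Prod.snd h)) s
    (fun i _ => h.1 i)
    (fun i hi => by
      rw [Equiv.coe_addRight, holding_add_right_zero_one (mem_activeAgents.1 hi), holding,
        if_neg (mem_activeAgents.1 hi)]
      exact h.2.2 i (mem_activeAgents.1 hi) (t + 1) t.lt_succ_self ht)
  exact ⟨r, hr, hex.trans card_activeAgents, hfold ▸ h.trade ht⟩

theorem exists_validExec_rounds {t : ℕ} (ht : t < l) :
    ∃ r, ValidExec ⟨GS d l, GD d l⟩ r ∧ exchanges r = t * ((d - 1) * l) ∧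
      RoundInv d l t (r.foldl stepCycle ⟨GS d l, GD d l⟩) := by
  induction t with
  | zero => exact ⟨[], trivial, by simp [exchanges], roundInv_zero⟩
  | succ t ih =>
    obtain ⟨r, hr, hex, hinv⟩ := ih (by omega)
    obtain ⟨r', hr', hex', hinv'⟩ := exists_validExec_round hinv ht
    exact ⟨r ++ r', validExec_append.2 ⟨hr, hr'⟩,
      by rw [exchanges_append, hex, hex', Nat.succ_mul], by rwa [List.foldl_append]⟩

variable (d l) in
theorem exists_validExec_exchanges_eq (hl : 2 ≤ l) :
    ∃ r, ValidExec ⟨GS d l, GD d l⟩ r ∧ exchanges r = l + (d - 1) * l * l := by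
  obtain ⟨r, hr, hex, hinv⟩ := exists_validExec_rounds (d := d) (l := l) (t := l - 1) (by omega)
  obtain ⟨r', hr', hex', -⟩ := exists_validExec_trade (Equiv.addRight (1, 1))
    (holding_injective (l - 1)) univ (fun i _ => mem_coe.2 (mem_univ _))
    (fun i _ => add_ne_left.2 fun h : ((1, 1) : GAg d l) = 0 =>
      Fin.one_ne_zero_of_one_lt (by omega) (congrArg Prod.snd h)) _
    (fun i _ => hinv.1 i)
    (fun i _ => by rw [Equiv.coe_addRight, holding_pred_add_right_one_one]; exact hinv.2.1 i)
  refine ⟨r ++ r', validExec_append.2 ⟨hr, hr'⟩, ?_⟩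
  rw [exchanges_append, hex, hex', card_univ, Fintype.card_prod, Fintype.card_fin,
    Fintype.card_fin]
  obtain ⟨d, rfl⟩ := Nat.exists_eq_add_one_of_ne_zero (NeZero.ne d)
  obtain ⟨l, rfl⟩ := Nat.exists_eq_add_one_of_ne_zero (NeZero.ne l)
  simp only [Nat.add_sub_cancel]
  ring

end Instance

theorem stmt16_general (d l : ℕ) [NeZero d] [NeZero l] (hl : 2 ≤ l) :
    ValidExec ⟨GS d l, GD d l⟩ [CAll d l] ∧
    StaticExec [CAll d l] ∧
    exchanges [CAll d l] = d * l ∧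
    (∀ r : List (List (GAg d l × GAg d l)),
      ValidExec ⟨GS d l, GD d l⟩ r → StaticExec r → exchanges r ≤ d * l) ∧
    (∀ c : List (GAg d l × GAg d l),
      ¬ ValidCycle (stepCycle ⟨GS d l, GD d l⟩ (CAll d l)) c) ∧
    (∃ r : List (List (GAg d l × GAg d l)),
      ValidExec ⟨GS d l, GD d l⟩ r ∧ exchanges r = l + (d - 1) * l * l) ∧
    Filter.Tendsto (fun m : ℕ => (1 + ((m : ℝ) - 1) * l) / m)
      Filter.atTop (nhds l) := by
  refine ⟨⟨validCycle_CAll d l, trivial⟩, ?_, ?_, fun r _ hr => ?_, not_validCycle_after_CAll d l,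
    exists_validExec_exchanges_eq d l hl, tendsto_one_add_sub_one_mul_div l⟩
  · simpa [StaticExec] using (validCycle_CAll d l).2.2.1
  · simp [exchanges, CAll_eq, tradeCycle, allAgents, mul_comm]
  · simpa using exchanges_le_card_of_staticExec hr

/-- In `G_d` the giant cycle `C_all` is a valid optimal static
execution with `d·l` exchanges, after which no further cycle exists (so the greedy
algorithm performs exactly `d·l` exchanges), while some execution performs
`l + (d−1)·l²` exchanges; the resulting ratio `(1+(d−1)l)/d` tends to `l` as
`d → ∞`. -/
theorem stmt16 (d l : ℕ) [NeZero d] [NeZero l] (hd : 2 ≤ d) (hl : 2 ≤ l) :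
    ValidExec ⟨GS d l, GD d l⟩ [CAll d l] ∧
    StaticExec [CAll d l] ∧
    exchanges [CAll d l] = d * l ∧
    (∀ r : List (List (GAg d l × GAg d l)),
      ValidExec ⟨GS d l, GD d l⟩ r → StaticExec r → exchanges r ≤ d * l) ∧
    (∀ c : List (GAg d l × GAg d l),
      ¬ ValidCycle (stepCycle ⟨GS d l, GD d l⟩ (CAll d l)) c) ∧
    (∃ r : List (List (GAg d l × GAg d l)),
      ValidExec ⟨GS d l, GD d l⟩ r ∧ exchanges r = l + (d - 1) * l * l) ∧
    Filter.Tendsto (fun m : ℕ => (1 + ((m : ℝ) - 1) * l) / m)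
      Filter.atTop (nhds l) :=
  stmt16_general d l hl
end

section
/- Given the multigraph union of a perfect matching M_X (of H with special vertices included) and a perfect matching M_{X−j} (of H minus the two copies of edge (i,j)), and the alternating path P from ((i,j),0) to ((i,j),1), the two edge sets M'_X = (P ∩ M_X) ∪ ((E∖P) ∩ M_{X−j}) and M'_{X−j} = (P ∩ M_{X−j}) ∪ ((E∖P) ∩ M_X) are valid matchings of the respective graphs (M'_X perfect on all of H, M'_{X−j} perfect on H minus the two copies of (i,j)), and w(M'_X) + w(M'_{X−j}) = w(M_X) + w(M_{X−j}) for any edge weighting w. -/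
/-!
Both matchings are involutions and the alternating path `P` is closed under each of them, so
swapping them on `P` gives involutions again, and pointwise the swap only exchanges the two
summands of the weight. The content is that `P` really ends at `(j, true)`: otherwise every
vertex `(m₂ ∘ m₁)^[k] (j, false)` stays on side `false`, while `m₂ ∘ m₁` is a permutation of a
finite set, so `(j, false) = m₂ (j, false)` would be the `m₁`-partner of such a vertex and lie
on side `true`.
-/

open scoped Classical

/-- The vertex set of the alternating path `P` that starts at `(j, false)` and takes
edges of the matchings `m₁` and `m₂` alternately. -/
def altPathSet {E : Type} (m₁ m₂ : E × Bool → E × Bool) (j : E) : Set (E × Bool) :=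
  {v | ∃ k : ℕ, (m₂ ∘ m₁)^[k] (j, false) = v ∨ m₁ ((m₂ ∘ m₁)^[k] (j, false)) = v}

open Function Set

section Piecewise

variable {V : Type*} {P : Set V} {f g : V → V}

lemma Function.Involutive.mapsTo_compl (hg : Involutive g) (hP : MapsTo g P P) :
    MapsTo g Pᶜ Pᶜ :=
  fun v hv hgv => hv (hg v ▸ hP hgv)

variable [DecidablePred (· ∈ P)]

lemma Set.piecewise_eq_or_eq (v : V) : P.piecewise f g v = f v ∨ P.piecewise f g v = g v := by
  by_cases hv : v ∈ P
  · exact Or.inl (piecewise_eq_of_mem P f g hv)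
  · exact Or.inr (piecewise_eq_of_notMem P f g hv)

lemma Function.Involutive.piecewise (hf : Involutive f) (hg : Involutive g)
    (hfP : MapsTo f P P) (hgP : MapsTo g P P) : Involutive (P.piecewise f g) := by
  intro v
  by_cases hv : v ∈ P
  · rw [piecewise_eq_of_mem P f g hv, piecewise_eq_of_mem P f g (hfP hv), hf]
  · rw [piecewise_eq_of_notMem P f g hv,
      piecewise_eq_of_notMem P f g (hg.mapsTo_compl hgP hv), hg]

lemma Set.piecewise_eq_self_iff {v : V} :
    P.piecewise f g v = v ↔ (v ∈ P ∧ f v = v) ∨ (v ∉ P ∧ g v = v) := by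
  by_cases hv : v ∈ P <;> simp [hv]

lemma Finset.sum_piecewise_add_sum_piecewise {M : Type*} [AddCommMonoid M] [Fintype V]
    (w : V → V → M) :
    ∑ v, w v (P.piecewise f g v) + ∑ v, w v (P.piecewise g f v)
      = ∑ v, w v (f v) + ∑ v, w v (g v) := by
  simp only [← Finset.sum_add_distrib]
  refine Finset.sum_congr rfl fun v _ => ?_
  by_cases hv : v ∈ P
  · simp [Set.piecewise_eq_of_mem _ _ _ hv]
  · simp [Set.piecewise_eq_of_notMem _ _ _ hv, add_comm]

end Piecewise

section AltPath

variable {E : Type} {m₁ m₂ : E × Bool → E × Bool} {j : E}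

lemma start_mem_altPathSet : (j, false) ∈ altPathSet m₁ m₂ j :=
  ⟨0, Or.inl rfl⟩

lemma mapsTo_altPathSet_left (h₁inv : Involutive m₁) :
    MapsTo m₁ (altPathSet m₁ m₂ j) (altPathSet m₁ m₂ j) := by
  rintro v ⟨k, rfl | rfl⟩
  · exact ⟨k, Or.inr rfl⟩
  · exact ⟨k, Or.inl (h₁inv _).symm⟩

lemma mapsTo_altPathSet_right (h₂inv : Involutive m₂) (h₂start : m₂ (j, false) = (j, false)) :
    MapsTo m₂ (altPathSet m₁ m₂ j) (altPathSet m₁ m₂ j) := by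
  rintro v ⟨k, rfl | rfl⟩
  · cases k with
    | zero => exact ⟨0, Or.inl h₂start.symm⟩
    | succ k =>
      refine ⟨k, Or.inr ?_⟩
      rw [iterate_succ_apply', comp_apply, h₂inv]
  · exact ⟨k + 1, Or.inl (iterate_succ_apply' _ _ _)⟩

lemma snd_iterate_eq_false_of_end_notMem (h₁side : ∀ v, (m₁ v).2 ≠ v.2)
    (h₂fix : ∀ v, m₂ v = v → v = (j, false) ∨ v = (j, true))
    (h₂side : ∀ v, m₂ v ≠ v → (m₂ v).2 ≠ v.2) (hend : (j, true) ∉ altPathSet m₁ m₂ j)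
    (k : ℕ) : ((m₂ ∘ m₁)^[k] (j, false)).2 = false := by
  induction k with
  | zero => rfl
  | succ k ih =>
    set a := (m₂ ∘ m₁)^[k] (j, false)
    have ha₁ : (m₁ a).2 = true := by simpa [ih] using h₁side a
    have hmoved : m₂ (m₁ a) ≠ m₁ a := by
      intro h
      rcases h₂fix _ h with h' | h'
      · simp [h'] at ha₁
      · exact hend ⟨k, Or.inr h'⟩
    rw [iterate_succ_apply']
    simpa [ha₁] using h₂side _ hmoved

lemma end_mem_altPathSet [Finite E] (h₁inv : Involutive m₁) (h₁side : ∀ v, (m₁ v).2 ≠ v.2)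
    (h₂inv : Involutive m₂) (h₂fix : ∀ v, m₂ v = v ↔ v = (j, false) ∨ v = (j, true))
    (h₂side : ∀ v, m₂ v ≠ v → (m₂ v).2 ≠ v.2) :
    (j, true) ∈ altPathSet m₁ m₂ j := by
  by_contra hend
  have hside := snd_iterate_eq_false_of_end_notMem h₁side (fun v => (h₂fix v).1) h₂side hend
  obtain ⟨n, hn, hper⟩ :=
    (h₂inv.injective.comp h₁inv.injective).mem_periodicPts ((j, false) : E × Bool)
  obtain ⟨q, rfl⟩ : ∃ q, n = q + 1 := ⟨n - 1, by omega⟩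
  have hstart : m₁ ((m₂ ∘ m₁)^[q] (j, false)) = (j, false) := by
    have := congrArg m₂ hper.eq
    rwa [iterate_succ_apply', comp_apply, h₂inv, (h₂fix _).2 (Or.inl rfl)] at this
  simpa [hstart, hside q] using h₁side ((m₂ ∘ m₁)^[q] (j, false))

end AltPath

theorem stmt18_general {E : Type} [Fintype E] (j : E)
    (m₁ m₂ : E × Bool → E × Bool)
    (h₁inv : Function.Involutive m₁)
    (h₁side : ∀ v, (m₁ v).2 ≠ v.2)
    (h₂inv : Function.Involutive m₂)
    (h₂fix : ∀ v, m₂ v = v ↔ v = (j, false) ∨ v = (j, true))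
    (h₂side : ∀ v, m₂ v ≠ v → (m₂ v).2 ≠ v.2) :
    let P := altPathSet m₁ m₂ j
    let MX' : E × Bool → E × Bool := fun v => if v ∈ P then m₁ v else m₂ v
    let Mj' : E × Bool → E × Bool := fun v => if v ∈ P then m₂ v else m₁ v
    (∀ v, MX' v = m₁ v ∨ MX' v = m₂ v) ∧
    (∀ v, Mj' v = m₁ v ∨ Mj' v = m₂ v) ∧
    Function.Involutive MX' ∧ (∀ v, MX' v ≠ v) ∧
    Function.Involutive Mj' ∧
    (∀ v, Mj' v = v ↔ v = (j, false) ∨ v = (j, true)) ∧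
    ∀ w : E × Bool → E × Bool → ℝ, (∀ u v, w u v = w v u) →
      (∑ v, w v (MX' v)) + (∑ v, w v (Mj' v))
        = (∑ v, w v (m₁ v)) + (∑ v, w v (m₂ v)) := by
  intro P MX' Mj'
  have h₁nf : ∀ v, m₁ v ≠ v := fun v h => h₁side v (congrArg Prod.snd h)
  have hP₁ : MapsTo m₁ P P := mapsTo_altPathSet_left h₁inv
  have hP₂ : MapsTo m₂ P P := mapsTo_altPathSet_right h₂inv ((h₂fix _).2 (Or.inl rfl))
  have hfix_mem : ∀ v, v = (j, false) ∨ v = (j, true) → v ∈ P := by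
    rintro v (rfl | rfl)
    exacts [start_mem_altPathSet, end_mem_altPathSet h₁inv h₁side h₂inv h₂fix h₂side]
  refine ⟨piecewise_eq_or_eq, fun v => (piecewise_eq_or_eq v).symm,
    h₁inv.piecewise h₂inv hP₁ hP₂, fun v => ?_, h₂inv.piecewise h₁inv hP₂ hP₁, fun v => ?_,
    fun w _ => Finset.sum_piecewise_add_sum_piecewise w⟩
  · change ¬P.piecewise m₁ m₂ v = v
    rw [piecewise_eq_self_iff, h₂fix]
    rintro (⟨-, h⟩ | ⟨hv, h⟩)
    exacts [h₁nf v h, hv (hfix_mem v h)]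
  · change P.piecewise m₂ m₁ v = v ↔ _
    rw [piecewise_eq_self_iff, ← h₂fix]
    simp only [h₁nf, and_false, or_false, and_iff_right_iff_imp]
    exact fun h => hfix_mem v ((h₂fix v).1 h)

/-- `H` is a bipartite graph on `E × {0,1}`; `m₁` (= `M_X`) is a
perfect matching of the full vertex set and `m₂` (= `M_{X−j}`) is a perfect matching
of the vertex set minus the two copies of the edge `j` (encoded as involutions, with
fixed points exactly the unmatched vertices). Swapping the two matchings along the
alternating path `P` from `(j,0)` to `(j,1)` yields valid matchings `M'_X` (perfect
on the full graph) and `M'_{X−j}` (perfect off the two copies of `j`), using only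
edges of the union, and with total weight preserved for every symmetric edge
weighting. -/
theorem stmt18 {E : Type} [Fintype E] [DecidableEq E] (j : E)
    (m₁ m₂ : E × Bool → E × Bool)
    (h₁inv : Function.Involutive m₁) (h₁nf : ∀ v, m₁ v ≠ v)
    (h₁side : ∀ v, (m₁ v).2 ≠ v.2)
    (h₂inv : Function.Involutive m₂)
    (h₂fix : ∀ v, m₂ v = v ↔ v = (j, false) ∨ v = (j, true))
    (h₂side : ∀ v, m₂ v ≠ v → (m₂ v).2 ≠ v.2) :
    let P := altPathSet m₁ m₂ j
    let MX' : E × Bool → E × Bool := fun v => if v ∈ P then m₁ v else m₂ v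
    let Mj' : E × Bool → E × Bool := fun v => if v ∈ P then m₂ v else m₁ v
    (∀ v, MX' v = m₁ v ∨ MX' v = m₂ v) ∧
    (∀ v, Mj' v = m₁ v ∨ Mj' v = m₂ v) ∧
    Function.Involutive MX' ∧ (∀ v, MX' v ≠ v) ∧
    Function.Involutive Mj' ∧
    (∀ v, Mj' v = v ↔ v = (j, false) ∨ v = (j, true)) ∧
    ∀ w : E × Bool → E × Bool → ℝ, (∀ u v, w u v = w v u) →
      (∑ v, w v (MX' v)) + (∑ v, w v (Mj' v))
        = (∑ v, w v (m₁ v)) + (∑ v, w v (m₂ v)) :=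
  stmt18_general j m₁ m₂ h₁inv h₁side h₂inv h₂fix h₂side
end
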